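/- arXiv:2504.03535 — 2 statements merged into one kernel-verified Lean document; each statement's English description precedes it below -/
import Mathlib

section
/- For σ ∈ Sym(ℤ,ℕ), the index I(σ) = |ℕ ∖ σ(ℕ)| − |σ(ℕ) ∖ ℕ| equals the number of σ-orbits O ⊆ ℤ such that for x ∈ O, σⁿ(x) → +∞ as n → +∞ and σⁿ(x) → −∞ as n → −∞, minus the number of σ-orbits with the opposite behavior (σⁿ(x) → −∞ as n → +∞ and σⁿ(x) → +∞ as n → −∞); both of these numbers are finite. -/
/- # Preliminaries: the commensurating group `Sym(ℤ,ℕ)` and its Polish topology. -/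

open Filter Set

namespace CfgPaper

/-- `ℕ` viewed inside `ℤ`. -/
def NN : Set ℤ := {n : ℤ | 0 ≤ n}

/-- The commensurating group of `ℤ`: permutations `σ` of `ℤ` with `σ(ℕ) ∆ ℕ` finite. -/
def SymZN : Subgroup (Equiv.Perm ℤ) where
  carrier := {σ | (symmDiff (⇑σ '' NN) NN).Finite}
  one_mem' := by
    simp only [Set.mem_setOf_eq, Equiv.Perm.coe_one, Set.image_id, symmDiff_self]
    exact Set.finite_empty
  mul_mem' := by
    intro a b ha hb
    simp only [Set.mem_setOf_eq] at *
    have himage : ⇑(a * b) '' NN = ⇑a '' (⇑b '' NN) := by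
      rw [Equiv.Perm.coe_mul, Set.image_comp]
    rw [himage]
    have htri : symmDiff (⇑a '' (⇑b '' NN)) NN ⊆
        symmDiff (⇑a '' (⇑b '' NN)) (⇑a '' NN) ∪ symmDiff (⇑a '' NN) NN :=
      symmDiff_triangle _ _ _
    have heq : symmDiff (⇑a '' (⇑b '' NN)) (⇑a '' NN) = ⇑a '' symmDiff (⇑b '' NN) NN :=
      (Set.image_symmDiff a.injective _ _).symm
    refine Set.Finite.subset (Set.Finite.union ?_ ha) htri
    rw [heq]
    exact hb.image _
  inv_mem' := by
    intro a ha
    simp only [Set.mem_setOf_eq] at *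
    have hinj : Set.InjOn ⇑a (symmDiff (⇑a⁻¹ '' NN) NN) := a.injective.injOn
    refine Set.Finite.of_finite_image ?_ hinj
    have himg : ⇑a '' symmDiff (⇑a⁻¹ '' NN) NN = symmDiff (⇑a '' (⇑a⁻¹ '' NN)) (⇑a '' NN) :=
      Set.image_symmDiff a.injective _ _
    have hroundtrip : ⇑a '' (⇑a⁻¹ '' NN) = NN := by
      rw [Set.image_image]
      simp only [Equiv.Perm.inv_def, Equiv.apply_symm_apply, Set.image_id']
    rw [himg, hroundtrip, symmDiff_comm]
    exact ha

lemma mem_SymZN {σ : Equiv.Perm ℤ} : σ ∈ SymZN ↔ (symmDiff (⇑σ '' NN) NN).Finite := Iff.rfl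

/-- The countable set `Comm(ℕ)` of subsets of `ℤ` commensurated to `ℕ`. -/
def CommNT : Type := {A : Set ℤ // (symmDiff A NN).Finite}

lemma image_commensurated {σ : Equiv.Perm ℤ} (hσ : σ ∈ SymZN) {A : Set ℤ}
    (hA : (symmDiff A NN).Finite) : (symmDiff (⇑σ '' A) NN).Finite := by
  have htri : symmDiff (⇑σ '' A) NN ⊆
      symmDiff (⇑σ '' A) (⇑σ '' NN) ∪ symmDiff (⇑σ '' NN) NN := symmDiff_triangle _ _ _
  have heq : symmDiff (⇑σ '' A) (⇑σ '' NN) = ⇑σ '' symmDiff A NN :=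
    (Set.image_symmDiff σ.injective _ _).symm
  refine Set.Finite.subset (Set.Finite.union ?_ hσ) htri
  rw [heq]
  exact hA.image _

/-- The faithful action of `Sym(ℤ,ℕ)` on `Comm(ℕ)` by permutations. -/
def symZNPerm (σ : SymZN) : Equiv.Perm CommNT where
  toFun A := ⟨⇑(σ : Equiv.Perm ℤ) '' A.1, image_commensurated σ.2 A.2⟩
  invFun A := ⟨⇑((σ : Equiv.Perm ℤ)⁻¹) '' A.1, image_commensurated (σ⁻¹ : SymZN).2 A.2⟩
  left_inv A := by
    apply Subtype.ext
    show ⇑((σ : Equiv.Perm ℤ)⁻¹) '' (⇑(σ : Equiv.Perm ℤ) '' A.1) = A.1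
    rw [Set.image_image]
    simp only [Equiv.Perm.inv_def, Equiv.symm_apply_apply, Set.image_id']
  right_inv A := by
    apply Subtype.ext
    show ⇑(σ : Equiv.Perm ℤ) '' (⇑((σ : Equiv.Perm ℤ)⁻¹) '' A.1) = A.1
    rw [Set.image_image]
    simp only [Equiv.Perm.inv_def, Equiv.apply_symm_apply, Set.image_id']

/-- The discrete topology on `Comm(ℕ)`. -/
def commNTTop : TopologicalSpace CommNT := ⊥

/-- The topology of pointwise convergence on the permutation group of the countable
set `Comm(ℕ)` (together with pointwise convergence of inverses). -/
def permCommTop : TopologicalSpace (Equiv.Perm CommNT) :=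
  TopologicalSpace.induced (fun π => (⇑π, ⇑π.symm))
    (@instTopologicalSpaceProd _ _
      (@Pi.topologicalSpace _ _ (fun _ => commNTTop))
      (@Pi.topologicalSpace _ _ (fun _ => commNTTop)))

/-- The Polish group topology on `Sym(ℤ,ℕ)`: the one induced by its faithful action
on `Comm(ℕ)`. -/
def symZNTop : TopologicalSpace SymZN :=
  TopologicalSpace.induced symZNPerm permCommTop

/- ## Statement 11 -/

/-- The index of `σ ∈ Sym(ℤ,ℕ)`: `|ℕ ∖ σ(ℕ)| − |σ(ℕ) ∖ ℕ|`. -/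
noncomputable def indexZ (σ : Equiv.Perm ℤ) : ℤ :=
  ((NN \ (⇑σ '' NN)).ncard : ℤ) - (((⇑σ '' NN) \ NN).ncard : ℤ)

/-- The `σ`-orbit of `x`. -/
def orbitOf (σ : Equiv.Perm ℤ) (x : ℤ) : Set ℤ := {y | ∃ n : ℤ, (σ ^ n) x = y}

/-- The set of `σ`-orbits going from `-∞` to `+∞`. -/
def posOrbits (σ : Equiv.Perm ℤ) : Set (Set ℤ) :=
  {O | (∃ x, O = orbitOf σ x) ∧ ∀ x ∈ O,
    Tendsto (fun n : ℕ => (σ ^ n) x) atTop atTop ∧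
    Tendsto (fun n : ℕ => (σ⁻¹ ^ n) x) atTop atBot}

/-- The set of `σ`-orbits going from `+∞` to `-∞`. -/
def negOrbits (σ : Equiv.Perm ℤ) : Set (Set ℤ) :=
  {O | (∃ x, O = orbitOf σ x) ∧ ∀ x ∈ O,
    Tendsto (fun n : ℕ => (σ ^ n) x) atTop atBot ∧
    Tendsto (fun n : ℕ => (σ⁻¹ ^ n) x) atTop atTop}

/- ### Auxiliary material for the proof of Statement 11 -/

/-- Points entering `ℕ` under `σ`. -/
def Aset (σ : Equiv.Perm ℤ) : Set ℤ := {x | x ∉ NN ∧ σ x ∈ NN}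

/-- Points leaving `ℕ` under `σ`. -/
def Bset (σ : Equiv.Perm ℤ) : Set ℤ := {x | x ∈ NN ∧ σ x ∉ NN}

lemma image_Aset (σ : Equiv.Perm ℤ) : ⇑σ '' Aset σ = NN \ (⇑σ '' NN) := by
  ext y
  constructor
  · rintro ⟨x, ⟨hx1, hx2⟩, rfl⟩
    refine ⟨hx2, ?_⟩
    rintro ⟨z, hz, hzy⟩
    exact hx1 (by rwa [σ.injective hzy] at hz)
  · rintro ⟨hy1, hy2⟩
    refine ⟨σ.symm y, ⟨?_, ?_⟩, σ.apply_symm_apply y⟩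
    · intro h
      exact hy2 ⟨σ.symm y, h, σ.apply_symm_apply y⟩
    · rwa [σ.apply_symm_apply]

lemma image_Bset (σ : Equiv.Perm ℤ) : ⇑σ '' Bset σ = (⇑σ '' NN) \ NN := by
  ext y
  constructor
  · rintro ⟨x, ⟨hx1, hx2⟩, rfl⟩
    exact ⟨⟨x, hx1, rfl⟩, hx2⟩
  · rintro ⟨⟨z, hz, rfl⟩, hy2⟩
    exact ⟨z, ⟨hz, hy2⟩, rfl⟩

lemma traj_add (σ : Equiv.Perm ℤ) (x : ℤ) (m n : ℤ) :
    (σ ^ m) ((σ ^ n) x) = (σ ^ (m + n)) x := by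
  rw [← Equiv.Perm.mul_apply, ← zpow_add]

lemma mem_orbit_self (σ : Equiv.Perm ℤ) (x : ℤ) : x ∈ orbitOf σ x := ⟨0, by simp⟩

lemma orbit_eq_of_mem {σ : Equiv.Perm ℤ} {x y : ℤ} (h : y ∈ orbitOf σ x) :
    orbitOf σ y = orbitOf σ x := by
  obtain ⟨m, rfl⟩ := h
  ext z
  constructor
  · rintro ⟨n, rfl⟩
    exact ⟨n + m, (traj_add σ x n m).symm⟩
  · rintro ⟨n, rfl⟩
    exact ⟨n - m, by rw [traj_add, sub_add_cancel]⟩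

lemma image_orbit (σ : Equiv.Perm ℤ) (x : ℤ) : ⇑σ '' orbitOf σ x = orbitOf σ x := by
  ext y
  constructor
  · rintro ⟨z, ⟨n, rfl⟩, rfl⟩
    refine ⟨1 + n, ?_⟩
    rw [← traj_add, zpow_one]
  · rintro ⟨n, rfl⟩
    refine ⟨(σ ^ (n - 1)) x, ⟨n - 1, rfl⟩, ?_⟩
    have : (σ ^ (1 : ℤ)) ((σ ^ (n - 1)) x) = (σ ^ n) x := by
      rw [traj_add]; ring_nf
    rw [← this, zpow_one]

lemma orbit_finite_of_period {σ : Equiv.Perm ℤ} {x : ℤ} {p : ℤ} (hp : 0 < p)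
    (h : (σ ^ p) x = x) : (orbitOf σ x).Finite := by
  have key : orbitOf σ x ⊆ (fun n : ℤ => (σ ^ n) x) '' (Set.Ico 0 p) := by
    rintro y ⟨n, rfl⟩
    refine ⟨n % p, ⟨Int.emod_nonneg n hp.ne', Int.emod_lt_of_pos n hp⟩, ?_⟩
    have hfix : ((σ ^ p) ^ (n / p)) x = x :=
      Equiv.Perm.zpow_apply_eq_self_of_apply_eq_self h _
    calc (σ ^ (n % p)) x = (σ ^ (n % p)) (((σ ^ p) ^ (n / p)) x) := by rw [hfix]
    _ = (σ ^ (n % p + p * (n / p))) x := by rw [← zpow_mul, traj_add]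
    _ = (σ ^ n) x := by rw [Int.emod_add_mul_ediv]
  exact ((Set.finite_Ico 0 p).image _).subset key

lemma traj_inj {σ : Equiv.Perm ℤ} {x : ℤ} (h : ¬ (orbitOf σ x).Finite) :
    Function.Injective fun n : ℤ => (σ ^ n) x := by
  intro m n hmn
  simp only at hmn
  by_contra hne
  apply h
  have key : ∀ a b : ℤ, a < b → (σ ^ a) x = (σ ^ b) x → (orbitOf σ x).Finite := by
    intro a b hab heq
    have hper : (σ ^ (b - a)) ((σ ^ a) x) = (σ ^ a) x := by
      rw [traj_add, sub_add_cancel, heq]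
    have : (orbitOf σ ((σ ^ a) x)).Finite :=
      orbit_finite_of_period (by omega) hper
    rwa [orbit_eq_of_mem ⟨a, rfl⟩] at this
  rcases lt_or_gt_of_ne hne with hlt | hlt
  · exact key m n hlt hmn
  · exact key n m hlt hmn.symm

lemma tendsto_atTop_of_inj {f : ℕ → ℤ} (hf : Function.Injective f)
    (h : ∀ᶠ n in atTop, 0 ≤ f n) : Tendsto f atTop atTop := by
  rw [tendsto_atTop]
  intro b
  have hfin : {n | f n ∈ Set.Ico (0:ℤ) b}.Finite :=
    Set.Finite.preimage hf.injOn (Set.finite_Ico 0 b)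
  have h2 : ∀ᶠ n in atTop, f n ∉ Set.Ico (0:ℤ) b := by
    have := hfin.compl_mem_cofinite
    rw [← Nat.cofinite_eq_atTop]
    exact this
  filter_upwards [h, h2] with n h1 h2
  by_contra hb
  exact h2 ⟨h1, lt_of_not_ge hb⟩

lemma tendsto_atBot_of_inj {f : ℕ → ℤ} (hf : Function.Injective f)
    (h : ∀ᶠ n in atTop, f n < 0) : Tendsto f atTop atBot := by
  rw [tendsto_atBot]
  intro b
  have hfin : {n | f n ∈ Set.Ioo b (0:ℤ)}.Finite :=
    Set.Finite.preimage hf.injOn (Set.finite_Ioo b 0)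
  have h2 : ∀ᶠ n in atTop, f n ∉ Set.Ioo b (0:ℤ) := by
    have := hfin.compl_mem_cofinite
    rw [← Nat.cofinite_eq_atTop]
    exact this
  filter_upwards [h, h2] with n h1 h2
  by_contra hb
  exact h2 ⟨lt_of_not_ge hb, h1⟩

lemma not_pos_and_neg {σ : Equiv.Perm ℤ} {O : Set ℤ}
    (h1 : O ∈ posOrbits σ) (h2 : O ∈ negOrbits σ) : False := by
  obtain ⟨⟨x, rfl⟩, hp⟩ := h1
  obtain ⟨-, hn⟩ := h2
  have hx := mem_orbit_self σ x
  have t1 := (hp x hx).1.eventually_ge_atTop 1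
  have t2 := (hn x hx).1.eventually_le_atBot 0
  obtain ⟨n, h1n, h2n⟩ := (t1.and t2).exists
  omega

lemma finite_not_pos {σ : Equiv.Perm ℤ} {x : ℤ} (hfin : (orbitOf σ x).Finite) :
    orbitOf σ x ∉ posOrbits σ := by
  rintro ⟨-, hp⟩
  have ht := (hp x (mem_orbit_self σ x)).1
  obtain ⟨b, hb⟩ := hfin.bddAbove
  obtain ⟨n, hn⟩ := (ht.eventually_ge_atTop (b+1)).exists
  have hmem : (σ ^ n) x ∈ orbitOf σ x := ⟨(n : ℤ), by rw [zpow_natCast]⟩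
  have := hb hmem
  omega

lemma finite_not_neg {σ : Equiv.Perm ℤ} {x : ℤ} (hfin : (orbitOf σ x).Finite) :
    orbitOf σ x ∉ negOrbits σ := by
  rintro ⟨-, hp⟩
  have ht := (hp x (mem_orbit_self σ x)).1
  obtain ⟨b, hb⟩ := hfin.bddBelow
  obtain ⟨n, hn⟩ := (ht.eventually_le_atBot (b-1)).exists
  have hmem : (σ ^ n) x ∈ orbitOf σ x := ⟨(n : ℤ), by rw [zpow_natCast]⟩
  have := hb hmem
  omega

lemma finite_balance (σ : Equiv.Perm ℤ) {x : ℤ} (hfin : (orbitOf σ x).Finite) :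
    (Aset σ ∩ orbitOf σ x).ncard = (Bset σ ∩ orbitOf σ x).ncard := by
  set O := orbitOf σ x with hO
  set P := O ∩ NN with hP
  have hPfin : P.Finite := hfin.inter_of_left _
  have himgO : ⇑σ '' O = O := image_orbit σ x
  -- image of A ∩ O
  have hAim : ⇑σ '' (Aset σ ∩ O) = P \ (P ∩ ⇑σ '' P) := by
    ext z
    constructor
    · rintro ⟨y, ⟨⟨hy1, hy2⟩, hyO⟩, rfl⟩
      have hzO : σ y ∈ O := himgO ▸ ⟨y, hyO, rfl⟩
      refine ⟨⟨hzO, hy2⟩, ?_⟩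
      rintro ⟨-, w, ⟨-, hwN⟩, hw⟩
      exact hy1 (by rwa [← σ.injective hw])
    · rintro ⟨⟨hzO, hzN⟩, hz2⟩
      obtain ⟨y, hyO, rfl⟩ : z ∈ ⇑σ '' O := himgO.symm ▸ hzO
      refine ⟨y, ⟨⟨?_, hzN⟩, hyO⟩, rfl⟩
      intro hyN
      exact hz2 ⟨⟨hzO, hzN⟩, y, ⟨hyO, hyN⟩, rfl⟩
  -- image of B ∩ O
  have hBim : ⇑σ '' (Bset σ ∩ O) = (⇑σ '' P) \ (P ∩ ⇑σ '' P) := by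
    ext z
    constructor
    · rintro ⟨y, ⟨⟨hy1, hy2⟩, hyO⟩, rfl⟩
      have hzO : σ y ∈ O := himgO ▸ ⟨y, hyO, rfl⟩
      exact ⟨⟨y, ⟨hyO, hy1⟩, rfl⟩, fun hmem => hy2 hmem.1.2⟩
    · rintro ⟨⟨y, ⟨hyO, hyN⟩, rfl⟩, hz2⟩
      have hzO : σ y ∈ O := himgO ▸ ⟨y, hyO, rfl⟩
      refine ⟨y, ⟨⟨hyN, fun hN => hz2 ⟨⟨hzO, hN⟩, y, ⟨hyO, hyN⟩, rfl⟩⟩, hyO⟩, rfl⟩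
  have e1 : (Aset σ ∩ O).ncard = (⇑σ '' (Aset σ ∩ O)).ncard :=
    (Set.ncard_image_of_injective _ σ.injective).symm
  have e2 : (Bset σ ∩ O).ncard = (⇑σ '' (Bset σ ∩ O)).ncard :=
    (Set.ncard_image_of_injective _ σ.injective).symm
  have hIfin : (P ∩ ⇑σ '' P).Finite := hPfin.subset Set.inter_subset_left
  have d1 : (P \ (P ∩ ⇑σ '' P)).ncard = P.ncard - (P ∩ ⇑σ '' P).ncard :=
    Set.ncard_diff Set.inter_subset_left hIfin
  have d2 : (⇑σ '' P \ (P ∩ ⇑σ '' P)).ncard = (⇑σ '' P).ncard - (P ∩ ⇑σ '' P).ncard :=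
    Set.ncard_diff Set.inter_subset_right hIfin
  rw [e1, e2, hAim, hBim, d1, d2, Set.ncard_image_of_injective _ σ.injective]

open scoped Classical in
lemma crossing (s : ℤ → Prop)
    (hU : {n : ℤ | ¬ s n ∧ s (n+1)}.Finite) (hD : {n : ℤ | s n ∧ ¬ s (n+1)}.Finite) :
    ∃ N M : ℤ, (∀ n, N ≤ n → (s n ↔ s N)) ∧ (∀ n, n ≤ M → (s n ↔ s M)) ∧
      (({n : ℤ | ¬ s n ∧ s (n+1)}.ncard : ℤ) - ({n : ℤ | s n ∧ ¬ s (n+1)}.ncard : ℤ)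
        = (if s N then (1:ℤ) else 0) - (if s M then (1:ℤ) else 0)) := by
  set U := {n : ℤ | ¬ s n ∧ s (n+1)} with hUdef
  set D := {n : ℤ | s n ∧ ¬ s (n+1)} with hDdef
  obtain ⟨a, ha⟩ := (hU.union hD).bddAbove
  obtain ⟨b, hb⟩ := (hU.union hD).bddBelow
  set N := max a b + 1 with hN
  set M := min a b - 1 with hM
  have hnc : ∀ n : ℤ, n ∉ U ∪ D → (s n ↔ s (n+1)) := by
    intro n hn
    have h1 : ¬ (¬ s n ∧ s (n+1)) := fun hc => hn (Or.inl hc)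
    have h2 : ¬ (s n ∧ ¬ s (n+1)) := fun hc => hn (Or.inr hc)
    tauto
  have hnotin : ∀ n : ℤ, a < n → n ∉ U ∪ D := fun n hn hc => absurd (ha hc) (by omega)
  have hnotlow : ∀ n : ℤ, n < b → n ∉ U ∪ D := fun n hn hc => absurd (hb hc) (by omega)
  have hup : ∀ n, N ≤ n → (s n ↔ s N) := by
    refine Int.le_induction Iff.rfl ?_
    intro n hn ih
    have h' := hnc n (hnotin n (by omega))
    exact h'.symm.trans ih
  have hdown : ∀ n, n ≤ M → (s n ↔ s M) := by
    refine Int.le_induction_down Iff.rfl ?_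
    intro n hn ih
    have h' := hnc (n-1) (hnotlow (n-1) (by omega))
    simp only [sub_add_cancel] at h'
    exact h'.trans ih
  have key : ∀ n : ℤ, M ≤ n →
      ((U ∩ Set.Ico M n).ncard : ℤ) - ((D ∩ Set.Ico M n).ncard : ℤ)
        = (if s n then (1:ℤ) else 0) - (if s M then (1:ℤ) else 0) := by
    refine Int.le_induction (by simp [Set.Ico_self]) ?_
    intro n hn ih
    · have hins : Set.Ico M (n+1) = insert n (Set.Ico M n) := by
        ext m
        simp only [Set.mem_Ico, Set.mem_insert_iff]
        omega
      have hnotmem : n ∉ Set.Ico M n := by simp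
      have hUX : ((U ∩ Set.Ico M (n+1)).ncard : ℤ)
          = ((U ∩ Set.Ico M n).ncard : ℤ) + (if n ∈ U then 1 else 0) := by
        rw [hins]
        by_cases hnU : n ∈ U
        · rw [Set.inter_insert_of_mem hnU,
            Set.ncard_insert_of_notMem (fun hc => hnotmem hc.2) (hU.inter_of_left _),
            if_pos hnU]
          push_cast
          ring
        · rw [Set.inter_insert_of_notMem hnU, if_neg hnU, add_zero]
      have hDX : ((D ∩ Set.Ico M (n+1)).ncard : ℤ)
          = ((D ∩ Set.Ico M n).ncard : ℤ) + (if n ∈ D then 1 else 0) := by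
        rw [hins]
        by_cases hnD : n ∈ D
        · rw [Set.inter_insert_of_mem hnD,
            Set.ncard_insert_of_notMem (fun hc => hnotmem hc.2) (hD.inter_of_left _),
            if_pos hnD]
          push_cast
          ring
        · rw [Set.inter_insert_of_notMem hnD, if_neg hnD, add_zero]
      have hstep : (if s (n+1) then (1:ℤ) else 0) - (if s n then (1:ℤ) else 0)
          = (if n ∈ U then (1:ℤ) else 0) - (if n ∈ D then (1:ℤ) else 0) := by
        have hU' : n ∈ U ↔ (¬ s n ∧ s (n+1)) := Iff.rfl
        have hD' : n ∈ D ↔ (s n ∧ ¬ s (n+1)) := Iff.rfl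
        by_cases h1 : s n <;> by_cases h2 : s (n+1) <;> simp [hU', hD', h1, h2]
      rw [hUX, hDX]
      linarith [ih, hstep]
  have hM_le_N : M ≤ N := by
    have h1 := le_max_left a b
    have h2 := min_le_left a b
    omega
  have hUsub : U ∩ Set.Ico M N = U := by
    rw [Set.inter_eq_left]
    intro u hu
    have h1 := ha (Set.mem_union_left _ hu)
    have h2 := hb (Set.mem_union_left _ hu)
    have h3 := le_max_left a b
    have h4 := min_le_left a b
    simp only [Set.mem_Ico]
    omega
  have hDsub : D ∩ Set.Ico M N = D := by
    rw [Set.inter_eq_left]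
    intro u hu
    have h1 := ha (Set.mem_union_right _ hu)
    have h2 := hb (Set.mem_union_right _ hu)
    have h3 := le_max_left a b
    have h4 := min_le_left a b
    simp only [Set.mem_Ico]
    omega
  have hfin := key N hM_le_N
  rw [hUsub, hDsub] at hfin
  exact ⟨N, M, hup, hdown, hfin⟩

lemma not_tendsto_both {f : ℕ → ℤ} (h1 : Tendsto f atTop atTop)
    (h2 : Tendsto f atTop atBot) : False := by
  obtain ⟨k, hk1, hk2⟩ := ((h1.eventually_ge_atTop 1).and (h2.eventually_le_atBot 0)).exists
  omega

open scoped Classical in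
lemma orbit_key (σ : Equiv.Perm ℤ) (hA : (Aset σ).Finite) (hB : (Bset σ).Finite) (x : ℤ) :
    ((Aset σ ∩ orbitOf σ x).ncard : ℤ) - ((Bset σ ∩ orbitOf σ x).ncard : ℤ)
      = (if orbitOf σ x ∈ posOrbits σ then (1:ℤ) else 0)
        - (if orbitOf σ x ∈ negOrbits σ then (1:ℤ) else 0) := by
  by_cases hfin : (orbitOf σ x).Finite
  · rw [finite_balance σ hfin, if_neg (finite_not_pos hfin), if_neg (finite_not_neg hfin)]
    ring
  · have hinj : Function.Injective fun n : ℤ => (σ ^ n) x := traj_inj hfin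
    set t : ℤ → ℤ := fun n => (σ ^ n) x with htdef
    have hstep : ∀ n : ℤ, t (n+1) = σ (t n) := by
      intro n
      calc t (n+1) = (σ ^ (1 + n)) x := by rw [add_comm]
      _ = (σ ^ (1:ℤ)) (t n) := (traj_add σ x 1 n).symm
      _ = σ (t n) := by rw [zpow_one]
    have hnat : ∀ (y : ℤ) (k : ℕ), (σ ^ k) y = (σ ^ (k:ℤ)) y := by
      intro y k; rw [zpow_natCast]
    have hinvnat : ∀ (y : ℤ) (k : ℕ), (σ⁻¹ ^ k) y = (σ ^ (-(k:ℤ))) y := by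
      intro y k; rw [inv_pow, ← zpow_natCast σ, ← zpow_neg]
    set s : ℤ → Prop := fun n => t n ∈ NN with hsdef
    have hUset : {n : ℤ | ¬ s n ∧ s (n+1)} = t ⁻¹' (Aset σ) := by
      ext n
      simp only [Set.mem_setOf_eq, Set.mem_preimage, Aset, hsdef, hstep n]
    have hDset : {n : ℤ | s n ∧ ¬ s (n+1)} = t ⁻¹' (Bset σ) := by
      ext n
      simp only [Set.mem_setOf_eq, Set.mem_preimage, Bset, hsdef, hstep n]
    have hUfin : {n : ℤ | ¬ s n ∧ s (n+1)}.Finite := by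
      rw [hUset]; exact hA.preimage hinj.injOn
    have hDfin : {n : ℤ | s n ∧ ¬ s (n+1)}.Finite := by
      rw [hDset]; exact hB.preimage hinj.injOn
    have hAcount : Aset σ ∩ orbitOf σ x = t '' (t ⁻¹' (Aset σ)) := by
      ext a
      constructor
      · rintro ⟨haA, n, hn⟩
        exact ⟨n, by rwa [Set.mem_preimage, show t n = a from hn], hn⟩
      · rintro ⟨n, hnA, rfl⟩
        exact ⟨hnA, n, rfl⟩
    have hBcount : Bset σ ∩ orbitOf σ x = t '' (t ⁻¹' (Bset σ)) := by
      ext a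
      constructor
      · rintro ⟨haB, n, hn⟩
        exact ⟨n, by rwa [Set.mem_preimage, show t n = a from hn], hn⟩
      · rintro ⟨n, hnB, rfl⟩
        exact ⟨hnB, n, rfl⟩
    obtain ⟨N, M, hup, hdown, hsum⟩ := crossing s hUfin hDfin
    have hA1 : (Aset σ ∩ orbitOf σ x).ncard = {n : ℤ | ¬ s n ∧ s (n+1)}.ncard := by
      rw [hAcount, Set.ncard_image_of_injective _ hinj, hUset]
    have hB1 : (Bset σ ∩ orbitOf σ x).ncard = {n : ℤ | s n ∧ ¬ s (n+1)}.ncard := by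
      rw [hBcount, Set.ncard_image_of_injective _ hinj, hDset]
    -- sign information
    have hposN : s N → ∀ n, N ≤ n → 0 ≤ t n := fun h n hn => (hup n hn).mpr h
    have hnegN : ¬ s N → ∀ n, N ≤ n → t n < 0 := by
      intro h n hn
      have : ¬ (0 ≤ t n) := fun hc => h ((hup n hn).mp hc)
      omega
    have hposM : s M → ∀ n, n ≤ M → 0 ≤ t n := fun h n hn => (hdown n hn).mpr h
    have hnegM : ¬ s M → ∀ n, n ≤ M → t n < 0 := by
      intro h n hn
      have : ¬ (0 ≤ t n) := fun hc => h ((hdown n hn).mp hc)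
      omega
    -- trajectory identities along the orbit
    have hfid : ∀ (m : ℤ) (k : ℕ), (σ ^ k) (t m) = t ((k:ℤ) + m) := by
      intro m k
      rw [hnat]
      exact traj_add σ x (k:ℤ) m
    have hgid : ∀ (m : ℤ) (k : ℕ), (σ⁻¹ ^ k) (t m) = t (m - (k:ℤ)) := by
      intro m k
      rw [hinvnat]
      rw [show m - (k:ℤ) = -(k:ℤ) + m by ring]
      exact traj_add σ x (-(k:ℤ)) m
    have hfinj : ∀ m : ℤ, Function.Injective fun k : ℕ => (σ ^ k) (t m) := by
      intro m k1 k2 h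
      simp only [hfid] at h
      have := hinj h
      omega
    have hginj : ∀ m : ℤ, Function.Injective fun k : ℕ => (σ⁻¹ ^ k) (t m) := by
      intro m k1 k2 h
      simp only [hgid] at h
      have := hinj h
      omega
    -- the four tendsto constructors
    have fwd_top : s N → ∀ y ∈ orbitOf σ x,
        Tendsto (fun k : ℕ => (σ ^ k) y) atTop atTop := by
      intro hsN y hy
      obtain ⟨m, rfl⟩ := hy
      refine tendsto_atTop_of_inj (hfinj m) ?_
      rw [eventually_atTop]
      refine ⟨(N - m).toNat, fun k hk => ?_⟩
      rw [hfid]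
      exact hposN hsN _ (by omega)
    have fwd_bot : ¬ s N → ∀ y ∈ orbitOf σ x,
        Tendsto (fun k : ℕ => (σ ^ k) y) atTop atBot := by
      intro hsN y hy
      obtain ⟨m, rfl⟩ := hy
      refine tendsto_atBot_of_inj (hfinj m) ?_
      rw [eventually_atTop]
      refine ⟨(N - m).toNat, fun k hk => ?_⟩
      rw [hfid]
      exact hnegN hsN _ (by omega)
    have bwd_top : s M → ∀ y ∈ orbitOf σ x,
        Tendsto (fun k : ℕ => (σ⁻¹ ^ k) y) atTop atTop := by
      intro hsM y hy
      obtain ⟨m, rfl⟩ := hy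
      refine tendsto_atTop_of_inj (hginj m) ?_
      rw [eventually_atTop]
      refine ⟨(m - M).toNat, fun k hk => ?_⟩
      rw [hgid]
      exact hposM hsM _ (by omega)
    have bwd_bot : ¬ s M → ∀ y ∈ orbitOf σ x,
        Tendsto (fun k : ℕ => (σ⁻¹ ^ k) y) atTop atBot := by
      intro hsM y hy
      obtain ⟨m, rfl⟩ := hy
      refine tendsto_atBot_of_inj (hginj m) ?_
      rw [eventually_atTop]
      refine ⟨(m - M).toNat, fun k hk => ?_⟩
      rw [hgid]
      exact hnegM hsM _ (by omega)
    have hxmem := mem_orbit_self σ x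
    rw [hA1, hB1, hsum]
    by_cases h1 : s N <;> by_cases h2 : s M
    · -- constant on both sides: not pos, not neg
      have hnp : orbitOf σ x ∉ posOrbits σ := fun hp =>
        not_tendsto_both (bwd_top h2 x hxmem) ((hp.2 x hxmem).2)
      have hnn : orbitOf σ x ∉ negOrbits σ := fun hn =>
        not_tendsto_both (fwd_top h1 x hxmem) ((hn.2 x hxmem).1)
      simp [h1, h2, hnp, hnn]
    · -- pos orbit
      have hp : orbitOf σ x ∈ posOrbits σ :=
        ⟨⟨x, rfl⟩, fun y hy => ⟨fwd_top h1 y hy, bwd_bot h2 y hy⟩⟩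
      have hnn : orbitOf σ x ∉ negOrbits σ := fun hn => not_pos_and_neg hp hn
      simp [h1, h2, hp, hnn]
    · -- neg orbit
      have hn : orbitOf σ x ∈ negOrbits σ :=
        ⟨⟨x, rfl⟩, fun y hy => ⟨fwd_bot h1 y hy, bwd_top h2 y hy⟩⟩
      have hnp : orbitOf σ x ∉ posOrbits σ := fun hp => not_pos_and_neg hp hn
      simp [h1, h2, hn, hnp]
    · -- constant on both sides (negative): not pos, not neg
      have hnp : orbitOf σ x ∉ posOrbits σ := fun hp =>
        not_tendsto_both ((hp.2 x hxmem).1) (fwd_bot h1 x hxmem)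
      have hnn : orbitOf σ x ∉ negOrbits σ := fun hn =>
        not_tendsto_both ((hn.2 x hxmem).2) (bwd_bot h2 x hxmem)
      simp [h1, h2, hnp, hnn]

/-- **Lemma.** For `σ ∈ Sym(ℤ,ℕ)`, the index `I(σ)` equals the number of `σ`-orbits going
from `-∞` to `+∞` minus the number of `σ`-orbits going from `+∞` to `-∞`; both of these
numbers are finite. -/
theorem indexZ_eq_orbit_count (σ : Equiv.Perm ℤ) (hσ : σ ∈ SymZN) :
    (posOrbits σ).Finite ∧ (negOrbits σ).Finite ∧
      indexZ σ = ((posOrbits σ).ncard : ℤ) - ((negOrbits σ).ncard : ℤ) := by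
  classical
  rw [mem_SymZN] at hσ
  have hd1 : (NN \ (⇑σ '' NN)).Finite := hσ.subset (by
    intro y hy
    rw [Set.mem_symmDiff]
    exact Or.inr ⟨hy.1, hy.2⟩)
  have hd2 : ((⇑σ '' NN) \ NN).Finite := hσ.subset (by
    intro y hy
    rw [Set.mem_symmDiff]
    exact Or.inl ⟨hy.1, hy.2⟩)
  have hA : (Aset σ).Finite :=
    Set.Finite.of_finite_image (by rw [image_Aset]; exact hd1) σ.injective.injOn
  have hB : (Bset σ).Finite :=
    Set.Finite.of_finite_image (by rw [image_Bset]; exact hd2) σ.injective.injOn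
  have hIA : indexZ σ = ((Aset σ).ncard : ℤ) - ((Bset σ).ncard : ℤ) := by
    unfold indexZ
    rw [← image_Aset, ← image_Bset, Set.ncard_image_of_injective _ σ.injective,
      Set.ncard_image_of_injective _ σ.injective]
  set q : ℤ → Set ℤ := fun a => orbitOf σ a with hq
  have hTfin : (Aset σ ∪ Bset σ).Finite := hA.union hB
  set Ofin : Finset (Set ℤ) := hTfin.toFinset.image q with hOfin
  have hmemO : ∀ a ∈ Aset σ ∪ Bset σ, q a ∈ Ofin := fun a ha =>
    Finset.mem_image.2 ⟨a, hTfin.mem_toFinset.2 ha, rfl⟩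
  have hposkey : ∀ x0 : ℤ, orbitOf σ x0 ∈ posOrbits σ → orbitOf σ x0 ∈ Ofin := by
    intro x0 hp
    have hk := orbit_key σ hA hB x0
    rw [if_pos hp, if_neg (fun hn => not_pos_and_neg hp hn)] at hk
    have hne : (Aset σ ∩ orbitOf σ x0).ncard ≠ 0 := by omega
    obtain ⟨a, haA, haO⟩ := Set.nonempty_of_ncard_ne_zero hne
    exact Finset.mem_image.2 ⟨a, hTfin.mem_toFinset.2 (Or.inl haA), orbit_eq_of_mem haO⟩
  have hnegkey : ∀ x0 : ℤ, orbitOf σ x0 ∈ negOrbits σ → orbitOf σ x0 ∈ Ofin := by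
    intro x0 hn
    have hk := orbit_key σ hA hB x0
    rw [if_neg (fun hp => not_pos_and_neg hp hn), if_pos hn] at hk
    have hne : (Bset σ ∩ orbitOf σ x0).ncard ≠ 0 := by omega
    obtain ⟨a, haB, haO⟩ := Set.nonempty_of_ncard_ne_zero hne
    exact Finset.mem_image.2 ⟨a, hTfin.mem_toFinset.2 (Or.inr haB), orbit_eq_of_mem haO⟩
  have hpossub : posOrbits σ ⊆ ↑Ofin := by
    intro O hO
    obtain ⟨x0, rfl⟩ := hO.1
    exact hposkey x0 hO
  have hnegsub : negOrbits σ ⊆ ↑Ofin := by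
    intro O hO
    obtain ⟨x0, rfl⟩ := hO.1
    exact hnegkey x0 hO
  refine ⟨Ofin.finite_toSet.subset hpossub, Ofin.finite_toSet.subset hnegsub, ?_⟩
  have hposeq : posOrbits σ = ↑(Ofin.filter (· ∈ posOrbits σ)) := by
    ext O
    simp only [Finset.coe_filter, Set.mem_setOf_eq]
    exact ⟨fun h => ⟨hpossub h, h⟩, fun h => h.2⟩
  have hnegeq : negOrbits σ = ↑(Ofin.filter (· ∈ negOrbits σ)) := by
    ext O
    simp only [Finset.coe_filter, Set.mem_setOf_eq]
    exact ⟨fun h => ⟨hnegsub h, h⟩, fun h => h.2⟩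
  have hposcard : ((posOrbits σ).ncard : ℤ) = ((Ofin.filter (· ∈ posOrbits σ)).card : ℤ) := by
    conv_lhs => rw [hposeq]
    rw [Set.ncard_coe_finset]
  have hnegcard : ((negOrbits σ).ncard : ℤ) = ((Ofin.filter (· ∈ negOrbits σ)).card : ℤ) := by
    conv_lhs => rw [hnegeq]
    rw [Set.ncard_coe_finset]
  set Afin := hA.toFinset with hAfin
  set Bfin := hB.toFinset with hBfin
  have hAsum : Afin.card = ∑ O ∈ Ofin, (Afin.filter (fun a => q a = O)).card :=
    Finset.card_eq_sum_card_fiberwise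
      (fun a ha => hmemO a (Or.inl (hA.mem_toFinset.1 ha)))
  have hBsum : Bfin.card = ∑ O ∈ Ofin, (Bfin.filter (fun a => q a = O)).card :=
    Finset.card_eq_sum_card_fiberwise
      (fun a ha => hmemO a (Or.inr (hB.mem_toFinset.1 ha)))
  have hfibA : ∀ O ∈ Ofin, (Afin.filter (fun a => q a = O)).card = (Aset σ ∩ O).ncard := by
    intro O hO
    obtain ⟨x0, -, rfl⟩ := Finset.mem_image.1 hO
    have heq : Aset σ ∩ q x0 = ↑(Afin.filter (fun a => q a = q x0)) := by
      ext a
      simp only [Finset.coe_filter, Set.mem_setOf_eq, hAfin, hA.mem_toFinset,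
        Set.mem_inter_iff]
      constructor
      · rintro ⟨ha1, ha2⟩
        exact ⟨ha1, orbit_eq_of_mem ha2⟩
      · rintro ⟨ha1, ha2⟩
        refine ⟨ha1, ?_⟩
        rw [show (q x0 : Set ℤ) = q a from ha2.symm]
        exact mem_orbit_self σ a
    rw [heq, Set.ncard_coe_finset]
  have hfibB : ∀ O ∈ Ofin, (Bfin.filter (fun a => q a = O)).card = (Bset σ ∩ O).ncard := by
    intro O hO
    obtain ⟨x0, -, rfl⟩ := Finset.mem_image.1 hO
    have heq : Bset σ ∩ q x0 = ↑(Bfin.filter (fun a => q a = q x0)) := by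
      ext a
      simp only [Finset.coe_filter, Set.mem_setOf_eq, hBfin, hB.mem_toFinset,
        Set.mem_inter_iff]
      constructor
      · rintro ⟨ha1, ha2⟩
        exact ⟨ha1, orbit_eq_of_mem ha2⟩
      · rintro ⟨ha1, ha2⟩
        refine ⟨ha1, ?_⟩
        rw [show (q x0 : Set ℤ) = q a from ha2.symm]
        exact mem_orbit_self σ a
    rw [heq, Set.ncard_coe_finset]
  have cA : ((Aset σ).ncard : ℤ) = ∑ O ∈ Ofin, ((Aset σ ∩ O).ncard : ℤ) := by
    rw [Set.ncard_eq_toFinset_card (Aset σ) hA, ← hAfin, hAsum]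
    push_cast
    exact Finset.sum_congr rfl (fun O hO => by rw [hfibA O hO])
  have cB : ((Bset σ).ncard : ℤ) = ∑ O ∈ Ofin, ((Bset σ ∩ O).ncard : ℤ) := by
    rw [Set.ncard_eq_toFinset_card (Bset σ) hB, ← hBfin, hBsum]
    push_cast
    exact Finset.sum_congr rfl (fun O hO => by rw [hfibB O hO])
  rw [hIA, hposcard, hnegcard, cA, cB, ← Finset.sum_sub_distrib]
  have hcongr : ∀ O ∈ Ofin, ((Aset σ ∩ O).ncard : ℤ) - ((Bset σ ∩ O).ncard : ℤ)
      = (if O ∈ posOrbits σ then (1:ℤ) else 0) - (if O ∈ negOrbits σ then (1:ℤ) else 0) := by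
    intro O hO
    obtain ⟨x0, -, rfl⟩ := Finset.mem_image.1 hO
    exact orbit_key σ hA hB x0
  rw [Finset.sum_congr rfl hcongr, Finset.sum_sub_distrib, Finset.sum_boole,
    Finset.sum_boole]


end CfgPaper
end

section
/- Let T ∈ Aut(X,[μ]) be aperiodic. Then every periodic element of [T]_com is a product of two involutions belonging to [T]_com. -/
/- # Preliminaries: the group `Aut(X,[μ])` of measure-class preserving transformations
   modulo a.e. equality, full groups, and the commensurating full group. -/

open MeasureTheory Filter Set

namespace CfgPaper

variable {X : Type*} [MeasurableSpace X]

/-- The group of bimeasurable bijections of `X` (composition as multiplication). -/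
instance : Group (X ≃ᵐ X) where
  mul a b := b.trans a
  one := MeasurableEquiv.refl X
  inv := MeasurableEquiv.symm
  mul_assoc a b c := rfl
  one_mul a := rfl
  mul_one a := rfl
  inv_mul_cancel a := by ext x; exact a.symm_apply_apply x

/-- The subgroup of bimeasurable bijections preserving the measure class of `μ`
(pointwise representatives, not yet identified a.e.). -/
def MCP (μ : Measure X) : Subgroup (X ≃ᵐ X) where
  carrier := {T | μ.map T ≪ μ ∧ μ ≪ μ.map T}
  one_mem' := by
    simp only [Set.mem_setOf_eq]
    rw [show ⇑(1 : X ≃ᵐ X) = id from rfl, Measure.map_id]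
    exact ⟨Measure.AbsolutelyContinuous.rfl, Measure.AbsolutelyContinuous.rfl⟩
  mul_mem' := by
    rintro a b ⟨ha1, ha2⟩ ⟨hb1, hb2⟩
    have hmap : μ.map (a * b) = (μ.map b).map a := by
      rw [show ⇑(a * b) = ⇑a ∘ ⇑b from rfl, ← Measure.map_map a.measurable b.measurable]
    constructor
    · rw [hmap]
      exact (hb1.map a.measurable).trans ha1
    · rw [hmap]
      exact ha2.trans (hb2.map a.measurable)
  inv_mem' := by
    rintro a ⟨ha1, ha2⟩
    have hid : μ.map (⇑a.symm ∘ ⇑a) = μ := by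
      rw [MeasurableEquiv.symm_comp_self, Measure.map_id]
    have hmap : (μ.map a).map a.symm = μ := by
      rw [Measure.map_map a.symm.measurable a.measurable, hid]
    constructor
    · calc μ.map ⇑a⁻¹ = μ.map a.symm := rfl
        _ ≪ (μ.map a).map a.symm := ha2.map a.symm.measurable
        _ = μ := hmap
    · calc μ = (μ.map a).map a.symm := hmap.symm
        _ ≪ μ.map a.symm := ha1.map a.symm.measurable
        _ = μ.map ⇑a⁻¹ := rfl

variable (μ : Measure X)

lemma MCP.qmp (T : MCP μ) : Measure.QuasiMeasurePreserving (⇑(T : X ≃ᵐ X)) μ μ :=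
  ⟨(T : X ≃ᵐ X).measurable, T.2.1⟩

/-- The normal subgroup of transformations a.e. equal to the identity. -/
def AeId : Subgroup (MCP μ) where
  carrier := {T | ∀ᵐ x ∂μ, ((T : X ≃ᵐ X)) x = x}
  one_mem' := by
    show ∀ᵐ x ∂μ, ((1 : X ≃ᵐ X)) x = x
    exact Filter.Eventually.of_forall fun x => rfl
  mul_mem' := by
    rintro a b ha hb
    have hnull : μ {y | ((a : X ≃ᵐ X)) y ≠ y} = 0 := by
      rw [← MeasureTheory.ae_iff]; exact ha
    have h1 : μ ((⇑(b : X ≃ᵐ X)) ⁻¹' {y | ((a : X ≃ᵐ X)) y ≠ y}) = 0 :=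
      (MCP.qmp μ b).preimage_null hnull
    have h2 : μ {x | ((b : X ≃ᵐ X)) x ≠ x} = 0 := by
      rw [← MeasureTheory.ae_iff]; exact hb
    have hsub : {x | ((((a * b : MCP μ) : X ≃ᵐ X))) x ≠ x} ⊆
        ((⇑(b : X ≃ᵐ X)) ⁻¹' {y | ((a : X ≃ᵐ X)) y ≠ y}) ∪ {x | ((b : X ≃ᵐ X)) x ≠ x} := by
      intro x hx
      by_contra hc
      simp only [Set.mem_union, Set.mem_preimage, Set.mem_setOf_eq, not_or, not_not] at hc
      obtain ⟨h₁, h₂⟩ := hc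
      exact hx (by
        show ((a : X ≃ᵐ X)) (((b : X ≃ᵐ X)) x) = x
        exact h₁.trans h₂)
    show ∀ᵐ x ∂μ, (((a * b : MCP μ) : X ≃ᵐ X)) x = x
    rw [MeasureTheory.ae_iff]
    exact measure_mono_null hsub (by
      exact le_antisymm ((measure_union_le _ _).trans (by rw [h1, h2]; simp)) (by simp))
  inv_mem' := by
    rintro a ha
    have hnull : μ {y | ((a : X ≃ᵐ X)) y ≠ y} = 0 := by
      rw [← MeasureTheory.ae_iff]; exact ha
    have h1 : μ ((⇑((a⁻¹ : MCP μ) : X ≃ᵐ X)) ⁻¹' {y | ((a : X ≃ᵐ X)) y ≠ y}) = 0 :=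
      (MCP.qmp μ a⁻¹).preimage_null hnull
    show ∀ᵐ x ∂μ, (((a⁻¹ : MCP μ) : X ≃ᵐ X)) x = x
    rw [MeasureTheory.ae_iff]
    refine measure_mono_null ?_ h1
    intro x hx
    rw [Set.mem_preimage, Set.mem_setOf_eq]
    intro hc
    apply hx
    show ((a⁻¹ : MCP μ) : X ≃ᵐ X) x = x
    have : ((a : X ≃ᵐ X)) (((a⁻¹ : MCP μ) : X ≃ᵐ X) x) = x := by
      show ((a : X ≃ᵐ X)) (((a : X ≃ᵐ X)).symm x) = x
      exact (a : X ≃ᵐ X).apply_symm_apply x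
    rw [hc] at this
    exact this

instance : (AeId μ).Normal := by
  constructor
  intro n hn g
  have hnull : μ {y | ((n : X ≃ᵐ X)) y ≠ y} = 0 := by
    rw [← MeasureTheory.ae_iff]; exact hn
  have h1 : μ ((⇑((g⁻¹ : MCP μ) : X ≃ᵐ X)) ⁻¹' {y | ((n : X ≃ᵐ X)) y ≠ y}) = 0 :=
    (MCP.qmp μ g⁻¹).preimage_null hnull
  show ∀ᵐ x ∂μ, (((g * n * g⁻¹ : MCP μ) : X ≃ᵐ X)) x = x
  rw [MeasureTheory.ae_iff]
  refine measure_mono_null ?_ h1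
  intro x hx
  rw [Set.mem_preimage, Set.mem_setOf_eq]
  intro hc
  apply hx
  show ((g : X ≃ᵐ X)) (((n : X ≃ᵐ X)) (((g⁻¹ : MCP μ) : X ≃ᵐ X) x)) = x
  rw [hc]
  show ((g : X ≃ᵐ X)) (((g : X ≃ᵐ X)).symm x) = x
  exact (g : X ≃ᵐ X).apply_symm_apply x

/-- `Aut(X,[μ])`: measure-class preserving transformations modulo a.e. equality. -/
def AutMod := MCP μ ⧸ AeId μ

noncomputable instance : Group (AutMod μ) :=
  QuotientGroup.Quotient.group (AeId μ)

/-- The class of a representative in `Aut(X,[μ])`. -/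
def toMod (T : MCP μ) : AutMod μ := QuotientGroup.mk T

/- ## Dynamical notions (on representatives) -/

/-- The (two-sided) orbit of `x` under `T`. -/
def orbitZ (T : X ≃ᵐ X) (x : X) : Set X := {y | ∃ n : ℤ, (T ^ n) x = y}

/-- `S` belongs to the full group of `T` (a.e. representative version): a.e. every point is
moved by `S` to a point of its `T`-orbit. -/
def InFull (T S : X ≃ᵐ X) : Prop := ∀ᵐ x ∂μ, ∃ n : ℤ, S x = (T ^ n) x

/-- The image of a set `M ⊆ ℤ` of `T`-exponents at `x` under the permutation of the
`T`-orbit of `x` induced by `S`: the set of `m` such that `T^m x ∈ S (T^M x)`. -/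
def permImage (T S : X ≃ᵐ X) (x : X) (M : Set ℤ) : Set ℤ :=
  {m : ℤ | ∃ n ∈ M, S ((T ^ n) x) = (T ^ m) x}

/-- The image of `ℕ` under the permutation of the `T`-orbit of `x` induced by `S`. -/
def fwdSet (T S : X ≃ᵐ X) (x : X) : Set ℤ := permImage T S x NN

/-- `S` lies in the commensurating full group of `T` (representative version):
`S ∈ [T]` and for a.e. `x` the permutation of the `T`-orbit induced by `S` commensurates `ℕ`. -/
def IsCommRep (T S : X ≃ᵐ X) : Prop :=
  InFull μ T S ∧ ∀ᵐ x ∂μ, (symmDiff (fwdSet T S x) NN).Finite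

/-- The pointwise index of `S` at `x`: `|ℕ ∖ σ(ℕ)| - |σ(ℕ) ∖ ℕ|` for the induced permutation. -/
noncomputable def ptIndex (T S : X ≃ᵐ X) (x : X) : ℤ :=
  ((NN \ fwdSet T S x).ncard : ℤ) - ((fwdSet T S x \ NN).ncard : ℤ)

/- ## Quotient-level notions -/

/-- The full group `[𝕋] ⊆ Aut(X,[μ])`. -/
def FullSet (𝕋 : AutMod μ) : Set (AutMod μ) :=
  {𝕊 | ∃ T S : MCP μ, toMod μ T = 𝕋 ∧ toMod μ S = 𝕊 ∧ InFull μ (T : X ≃ᵐ X) (S : X ≃ᵐ X)}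

/-- The commensurating full group `[𝕋]_com ⊆ Aut(X,[μ])` (as a set). -/
def CommFullSet (𝕋 : AutMod μ) : Set (AutMod μ) :=
  {𝕊 | ∃ T S : MCP μ, toMod μ T = 𝕋 ∧ toMod μ S = 𝕊 ∧ IsCommRep μ (T : X ≃ᵐ X) (S : X ≃ᵐ X)}

/-- `𝕊` is periodic: a.e. orbit is finite. -/
def PeriodicMod (𝕊 : AutMod μ) : Prop :=
  ∃ S : MCP μ, toMod μ S = 𝕊 ∧ ∀ᵐ x ∂μ, (orbitZ (S : X ≃ᵐ X) x).Finite

/-- `𝕋` is aperiodic: a.e. orbit is infinite. -/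
def AperiodicMod (𝕋 : AutMod μ) : Prop :=
  ∃ T : MCP μ, toMod μ T = 𝕋 ∧ ∀ᵐ x ∂μ, (orbitZ (T : X ≃ᵐ X) x).Infinite

/-- `𝕋` is ergodic: every invariant Borel set is null or conull. -/
def ErgodicMod (𝕋 : AutMod μ) : Prop :=
  ∃ T : MCP μ, toMod μ T = 𝕋 ∧ PreErgodic (⇑(T : X ≃ᵐ X)) μ

/-- The index map of `[𝕋]_com` takes the value `k` at `𝕊`. -/
def HasIndexMod (𝕋 𝕊 : AutMod μ) (k : ℤ) : Prop :=
  ∃ T S : MCP μ, toMod μ T = 𝕋 ∧ toMod μ S = 𝕊 ∧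
    ∀ᵐ x ∂μ, ptIndex (T : X ≃ᵐ X) (S : X ≃ᵐ X) x = k

/- ## The Polish topology on `[𝕋]_com` (convergence in measure of induced permutations) -/

/-- An encoding of the countable set `Comm(ℕ)` of subsets of `ℤ` commensurated to `ℕ`. -/
noncomputable def encComm (M : {A : Set ℤ // (symmDiff A NN).Finite}) : ℕ :=
  Encodable.encode M.2.toFinset

/-- A compatible distance between representatives: a weighted sum, over the subsets `M`
commensurated to `ℕ`, of the measure of the set of points where the permutations induced
by `S₁` and `S₂` (or their inverses) on the `T`-orbit disagree on `M`. This metrizes the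
topology of convergence in measure in `L⁰(X, Sym(ℤ,ℕ))` of the induced permutations. -/
noncomputable def repDist (T S₁ S₂ : X ≃ᵐ X) : ℝ :=
  ∑' M : {A : Set ℤ // (symmDiff A NN).Finite},
    (1 / 2 : ℝ) ^ (encComm M + 1) *
      ((μ {x | permImage T S₁ x M.1 ≠ permImage T S₂ x M.1}).toReal +
        (μ {x | permImage T S₁.symm x M.1 ≠ permImage T S₂.symm x M.1}).toReal)

/-- The induced distance on `Aut(X,[μ])` (independent of the chosen representatives). -/
noncomputable def qDist (𝕋 𝕊₁ 𝕊₂ : AutMod μ) : ℝ :=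
  ⨅ (T : MCP μ) (_ : toMod μ T = 𝕋) (S₁ : MCP μ) (_ : toMod μ S₁ = 𝕊₁)
    (S₂ : MCP μ) (_ : toMod μ S₂ = 𝕊₂), repDist μ (T : X ≃ᵐ X) (S₁ : X ≃ᵐ X) (S₂ : X ≃ᵐ X)

/-- The Polish topology of `[𝕋]_com`, generated by the balls of the distance above. -/
noncomputable def cfgTop (𝕋 : AutMod μ) :
    TopologicalSpace {𝕊 : AutMod μ // 𝕊 ∈ CommFullSet μ 𝕋} :=
  TopologicalSpace.generateFrom
    {U | ∃ (S₀ : {𝕊 : AutMod μ // 𝕊 ∈ CommFullSet μ 𝕋}) (ε : ℝ), 0 < ε ∧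
      U = {S | qDist μ 𝕋 S₀.1 S.1 < ε}}

/-- The derived subgroup of `[𝕋]_com` (generated by commutators of its elements). -/
noncomputable def derivedCfg (𝕋 : AutMod μ) : Subgroup (AutMod μ) :=
  Subgroup.closure
    {g | ∃ a ∈ CommFullSet μ 𝕋, ∃ b ∈ CommFullSet μ 𝕋, g = a * b * a⁻¹ * b⁻¹}

/-- The topological derived subgroup `D([𝕋]_com)‾`: the closure, in `[𝕋]_com`,
of the derived subgroup. -/
noncomputable def DbarSet (𝕋 : AutMod μ) : Set {𝕊 : AutMod μ // 𝕊 ∈ CommFullSet μ 𝕋} :=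
  @closure _ (cfgTop μ 𝕋) {S | S.1 ∈ derivedCfg μ 𝕋}

/- ## Auxiliary machinery -/
section Aux

variable {X : Type*} [MeasurableSpace X]

lemma cmul_apply (a b : X ≃ᵐ X) (x : X) : (a * b) x = a (b x) := rfl

@[simp] lemma cone_apply (x : X) : (1 : X ≃ᵐ X) x = x := rfl

lemma cinv_apply (a : X ≃ᵐ X) (x : X) : (a⁻¹) x = a.symm x := rfl

@[simp] lemma zpow_zero_apply (S : X ≃ᵐ X) (x : X) : (S ^ (0 : ℤ)) x = x := by
  rw [zpow_zero]; rfl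

lemma zpow_apply_add (S : X ≃ᵐ X) (m n : ℤ) (x : X) :
    (S ^ (m + n)) x = (S ^ m) ((S ^ n) x) := by
  rw [zpow_add]; rfl

lemma zpow_neg_apply (S : X ≃ᵐ X) (n : ℤ) (x : X) :
    (S ^ (-n)) x = (S ^ n).symm x := by
  rw [zpow_neg]; rfl

lemma fix_zpow {S : X ≃ᵐ X} {x : X} (hx : S x = x) (q : ℤ) : (S ^ q) x = x := by
  have hsymm : S.symm x = x := by
    conv_lhs => rw [← hx]
    exact S.symm_apply_apply x
  induction q using Int.induction_on with
  | zero => simp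
  | succ k ih => rw [show ((k : ℤ) + 1) = 1 + k by ring, zpow_apply_add, ih, zpow_one, hx]
  | pred k ih =>
      rw [show (-(k : ℤ) - 1) = (-1) + (-(k:ℤ)) by ring, zpow_apply_add, ih, zpow_neg_apply,
        zpow_one, hsymm]

lemma zpow_fix_mul {S : X ≃ᵐ X} {x : X} {p : ℤ} (hp : (S ^ p) x = x) (q : ℤ) :
    (S ^ (p * q)) x = x := by
  rw [zpow_mul]
  exact fix_zpow hp q

lemma zpow_emod {S : X ≃ᵐ X} {x : X} {p : ℤ} (hp : (S ^ p) x = x) (m : ℤ) :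
    (S ^ m) x = (S ^ (m % p)) x := by
  conv_lhs => rw [← Int.mul_ediv_add_emod m p]
  rw [add_comm, zpow_apply_add, zpow_fix_mul hp]

lemma zpow_congr {S : X ≃ᵐ X} {x : X} {p : ℤ} (hp : (S ^ p) x = x) {a b : ℤ}
    (hab : p ∣ (a - b)) : (S ^ a) x = (S ^ b) x := by
  rw [zpow_emod hp a, zpow_emod hp b]
  have : b ≡ a [ZMOD p] := Int.modEq_iff_dvd.mpr hab
  rw [show a % p = b % p from this.symm]

lemma fix_of_eq {S : X ≃ᵐ X} {x : X} {a b : ℤ} (h : (S ^ a) x = (S ^ b) x) :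
    (S ^ (a - b)) x = x := by
  have h1 : (S ^ (a - b)) ((S ^ b) x) = (S ^ b) x := by
    rw [← zpow_apply_add, sub_add_cancel, h]
  calc (S ^ (a - b)) x = (S ^ (a - b)) ((S ^ (-b + b)) x) := by rw [neg_add_cancel]; simp
    _ = (S ^ ((a - b) + (-b + b))) x := by rw [← zpow_apply_add]
    _ = (S ^ ((-b) + ((a - b) + b))) x := by ring_nf
    _ = (S ^ (-b)) ((S ^ ((a-b) + b)) x) := by rw [zpow_apply_add]
    _ = (S ^ (-b)) ((S ^ (a-b)) ((S ^ b) x)) := by rw [zpow_apply_add]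
    _ = (S ^ (-b)) ((S ^ b) x) := by rw [h1]
    _ = (S ^ (-b + b)) x := by rw [zpow_apply_add]
    _ = x := by rw [neg_add_cancel]; simp

lemma orbitZ_eq_range (S : X ≃ᵐ X) (x : X) :
    orbitZ S x = Set.range (fun n : ℤ => (S ^ n) x) := rfl

lemma orbit_finite_of_fix {S : X ≃ᵐ X} {x : X} {k : ℕ} (hk : 0 < k)
    (hfix : (S ^ (k : ℤ)) x = x) : (orbitZ S x).Finite := by
  rw [orbitZ_eq_range]
  apply Set.Finite.subset (Set.finite_range (fun i : Fin k => (S ^ ((i : ℕ) : ℤ)) x))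
  rintro y ⟨m, rfl⟩
  have hk0 : ((k : ℤ)) ≠ 0 := by exact_mod_cast hk.ne'
  have h1 : 0 ≤ m % (k : ℤ) := Int.emod_nonneg m hk0
  have h2 : m % (k : ℤ) < (k : ℤ) := Int.emod_lt_of_pos m (by exact_mod_cast hk)
  refine ⟨⟨(m % (k : ℤ)).toNat, by omega⟩, ?_⟩
  simp only
  rw [Int.toNat_of_nonneg h1]
  exact (zpow_emod hfix m).symm

lemma exists_fix_of_not_injective {S : X ≃ᵐ X} {x : X}
    (h : ¬ Function.Injective (fun n : ℤ => (S ^ n) x)) :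
    ∃ k : ℕ, 0 < k ∧ (S ^ (k : ℤ)) x = x := by
  simp only [Function.Injective, not_forall] at h
  obtain ⟨a, b, hab, hne⟩ := h
  have hfix : (S ^ (a - b)) x = x := fix_of_eq hab
  rcases lt_trichotomy a b with hlt | heq | hgt
  · have hfix2 : (S ^ (b - a)) x = x := by
      have := zpow_fix_mul hfix (-1)
      rwa [show (a - b) * (-1) = b - a by ring] at this
    exact ⟨(b - a).toNat, by omega, by rwa [Int.toNat_of_nonneg (by omega)]⟩
  · exact absurd heq hne
  · exact ⟨(a - b).toNat, by omega, by rwa [Int.toNat_of_nonneg (by omega)]⟩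

lemma injective_of_orbit_infinite {S : X ≃ᵐ X} {x : X} (h : (orbitZ S x).Infinite) :
    Function.Injective (fun n : ℤ => (S ^ n) x) := by
  by_contra hni
  obtain ⟨k, hk, hfix⟩ := exists_fix_of_not_injective hni
  exact h (orbit_finite_of_fix hk hfix)

/-- The set of points with finite `S`-orbit. -/
def PerSet (S : X ≃ᵐ X) : Set X := {x | ∃ k : ℕ, 0 < k ∧ (S ^ (k : ℤ)) x = x}

/-- The minimal period. -/
noncomputable def perN (S : X ≃ᵐ X) (x : X) : ℕ :=
  sInf {k : ℕ | 0 < k ∧ (S ^ (k : ℤ)) x = x}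

lemma orbit_finite_iff (S : X ≃ᵐ X) (x : X) :
    (orbitZ S x).Finite ↔ x ∈ PerSet S := by
  constructor
  · intro hf
    by_cases hinj : Function.Injective (fun n : ℤ => (S ^ n) x)
    · exfalso
      exact (Set.infinite_range_of_injective hinj) (by rwa [orbitZ_eq_range] at hf)
    · exact exists_fix_of_not_injective hinj
  · rintro ⟨k, hk, hfix⟩
    exact orbit_finite_of_fix hk hfix

lemma perN_pos_fix {S : X ≃ᵐ X} {x : X} (hx : x ∈ PerSet S) :
    0 < perN S x ∧ (S ^ ((perN S x : ℕ) : ℤ)) x = x :=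
  Nat.sInf_mem hx

lemma perN_min {S : X ≃ᵐ X} {x : X} (k : ℕ) (hk0 : 0 < k) (hk : k < perN S x) :
    (S ^ (k : ℤ)) x ≠ x :=
  fun hfix => Nat.notMem_of_lt_sInf hk ⟨hk0, hfix⟩

lemma fix_iff_dvd {S : X ≃ᵐ X} {x : X} (hx : x ∈ PerSet S) (m : ℤ) :
    (S ^ m) x = x ↔ ((perN S x : ℤ)) ∣ m := by
  obtain ⟨hn0, hnfix⟩ := perN_pos_fix hx
  set n := perN S x with hn
  constructor
  · intro hfix
    have h1 : (S ^ (m % (n : ℤ))) x = x := (zpow_emod hnfix m).symm.trans hfix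
    by_contra hdvd
    have hr0 : m % (n : ℤ) ≠ 0 := fun h0 => hdvd (Int.dvd_of_emod_eq_zero h0)
    have hge : 0 ≤ m % (n : ℤ) := Int.emod_nonneg m (by exact_mod_cast hn0.ne')
    have hlt : m % (n : ℤ) < (n : ℤ) := Int.emod_lt_of_pos m (by exact_mod_cast hn0)
    have hmin := perN_min (S := S) (x := x) (m % (n : ℤ)).toNat (by omega) (by omega)
    apply hmin
    rwa [Int.toNat_of_nonneg hge]
  · rintro ⟨t, rfl⟩
    exact zpow_fix_mul hnfix t

lemma perSet_zpow {S : X ≃ᵐ X} {x : X} (hx : x ∈ PerSet S) (k : ℤ) :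
    (S ^ k) x ∈ PerSet S ∧ perN S ((S ^ k) x) = perN S x := by
  have key : ∀ j : ℤ, ((S ^ j) ((S ^ k) x) = (S ^ k) x ↔ (S ^ j) x = x) := by
    intro j
    have hcomm : (S ^ j) ((S ^ k) x) = (S ^ k) ((S ^ j) x) := by
      rw [← zpow_apply_add, ← zpow_apply_add, add_comm]
    rw [hcomm]
    exact (S ^ k).injective.eq_iff
  constructor
  · obtain ⟨m, hm0, hmfix⟩ := hx
    exact ⟨m, hm0, (key m).mpr hmfix⟩
  · unfold perN
    congr 1
    ext m
    simp only [Set.mem_setOf_eq]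
    rw [key m]

end Aux
section Aux2

variable {X : Type*} [MeasurableSpace X]

open scoped Classical

/-- Position of `x` in its orbit relative to the `e`-minimal point. -/
noncomputable def posIdx (S : X ≃ᵐ X) (e : X → ℝ) (x : X) : ℕ :=
  sInf {i : ℕ | i < perN S x ∧
    ∀ j < perN S x, e ((S ^ (-(i : ℤ))) x) ≤ e ((S ^ (-(j : ℤ))) x)}

lemma posIdx_nonempty {S : X ≃ᵐ X} (e : X → ℝ) {x : X} (hx : x ∈ PerSet S) :
    {i : ℕ | i < perN S x ∧
      ∀ j < perN S x, e ((S ^ (-(i : ℤ))) x) ≤ e ((S ^ (-(j : ℤ))) x)}.Nonempty := by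
  obtain ⟨hn0, -⟩ := perN_pos_fix hx
  obtain ⟨i, hi, hmin⟩ := Finset.exists_min_image (Finset.range (perN S x))
    (fun j => e ((S ^ (-(j : ℤ))) x)) ⟨0, Finset.mem_range.mpr hn0⟩
  exact ⟨i, Finset.mem_range.mp hi, fun j hj => hmin j (Finset.mem_range.mpr hj)⟩

lemma posIdx_spec {S : X ≃ᵐ X} (e : X → ℝ) {x : X} (hx : x ∈ PerSet S) :
    posIdx S e x < perN S x ∧
      ∀ j < perN S x, e ((S ^ (-(posIdx S e x : ℤ))) x) ≤ e ((S ^ (-(j : ℤ))) x) :=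
  Nat.sInf_mem (posIdx_nonempty e hx)

lemma shift_rep {S : X ≃ᵐ X} {x : X} (hx : x ∈ PerSet S) (a : ℤ) :
    ∃ j : ℕ, j < perN S x ∧ (S ^ a) x = (S ^ (-(j : ℤ))) x := by
  obtain ⟨hn0, hnfix⟩ := perN_pos_fix hx
  set n := ((perN S x : ℕ) : ℤ) with hn
  have hnz : n ≠ 0 := by simp [hn]; omega
  have hnpos : (0:ℤ) < n := by simp [hn]; omega
  have h1 : 0 ≤ (-a) % n := Int.emod_nonneg (-a) hnz
  have h2 : (-a) % n < n := Int.emod_lt_of_pos (-a) hnpos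
  refine ⟨((-a) % n).toNat, by omega, ?_⟩
  rw [Int.toNat_of_nonneg h1]
  apply zpow_congr hnfix
  have hmod1 : a % n ≡ a [ZMOD n] := Int.emod_emod_of_dvd a dvd_rfl
  have hmod2 : (-a) % n ≡ -a [ZMOD n] := Int.emod_emod_of_dvd (-a) dvd_rfl
  have hmod3 : a % n + (-a) % n ≡ a + -a [ZMOD n] := hmod1.add hmod2
  rw [add_neg_cancel] at hmod3
  have hdvd : n ∣ (a % n + (-a) % n) := (Int.modEq_zero_iff_dvd).mp hmod3
  have heq : a - (-(((-a) % n))) = (a - a % n) + (a % n + (-a) % n) := by ring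
  rw [heq]
  exact dvd_add (Int.dvd_self_sub_of_emod_eq rfl) hdvd

lemma minpoint_eq {S : X ≃ᵐ X} {e : X → ℝ} (he : Function.Injective e) {x : X}
    (hx : x ∈ PerSet S) (k : ℤ) :
    (S ^ (-(posIdx S e ((S ^ k) x) : ℤ))) ((S ^ k) x) = (S ^ (-(posIdx S e x : ℤ))) x := by
  obtain ⟨hxk, hnk⟩ := perSet_zpow hx k
  obtain ⟨hp'lt, hp'min⟩ := posIdx_spec e hxk
  obtain ⟨hplt, hpmin⟩ := posIdx_spec e hx
  set y := (S ^ k) x with hy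
  set p' := posIdx S e y with hp'
  set p := posIdx S e x with hp
  have h1 : e ((S ^ (-(p' : ℤ))) y) ≤ e ((S ^ (-(p : ℤ))) x) := by
    have hxy : (S ^ ((-(p : ℤ)) - k)) y = (S ^ (-(p : ℤ))) x := by
      rw [hy, ← zpow_apply_add]
      congr 1
      ring
    obtain ⟨j, hj, hjy⟩ := shift_rep hxk ((-(p : ℤ)) - k)
    rw [← hxy, hjy]
    exact hp'min j hj
  have h2 : e ((S ^ (-(p : ℤ))) x) ≤ e ((S ^ (-(p' : ℤ))) y) := by
    have hyx : (S ^ (-(p' : ℤ))) y = (S ^ ((-(p' : ℤ)) + k)) x := by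
      rw [zpow_apply_add]
    obtain ⟨j, hj, hjx⟩ := shift_rep hx ((-(p' : ℤ)) + k)
    rw [hyx, hjx]
    exact hpmin j hj
  exact he (le_antisymm h1 h2)

lemma posIdx_congr {S : X ≃ᵐ X} {e : X → ℝ} (he : Function.Injective e) {x : X}
    (hx : x ∈ PerSet S) (k : ℤ) :
    ((perN S x : ℤ)) ∣ ((posIdx S e ((S ^ k) x) : ℤ) - ((posIdx S e x : ℤ) + k)) := by
  have hme := minpoint_eq he hx k
  set p' := (posIdx S e ((S ^ k) x) : ℤ)
  set p := (posIdx S e x : ℤ)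
  have h1 : (S ^ (-p' + k)) x = (S ^ (-p)) x := by
    rw [zpow_apply_add]; exact hme
  have h2 : (S ^ ((-p' + k) - (-p))) x = x := fix_of_eq h1
  have h3 := (fix_iff_dvd hx _).mp h2
  have : (p' - (p + k)) = -((-p' + k) - (-p)) := by ring
  rw [this]
  exact h3.neg_right

/-- The exponent defining the involutions. -/
noncomputable def gExp (S : X ≃ᵐ X) (e : X → ℝ) (c : ℤ) (x : X) : ℤ :=
  if x ∈ PerSet S then c - 2 * (posIdx S e x : ℤ) else 0

/-- The involution-type maps (`c = 0`: reversal; `c = 1`: shifted reversal). -/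
noncomputable def fInv (S : X ≃ᵐ X) (e : X → ℝ) (c : ℤ) (x : X) : X :=
  (S ^ (gExp S e c x)) x

lemma fInv_apply_of_mem {S : X ≃ᵐ X} {e : X → ℝ} {c : ℤ} {x : X} (hx : x ∈ PerSet S) :
    fInv S e c x = (S ^ (c - 2 * (posIdx S e x : ℤ))) x := by
  unfold fInv gExp
  rw [if_pos hx]

lemma fInv_apply_of_not_mem {S : X ≃ᵐ X} {e : X → ℝ} {c : ℤ} {x : X} (hx : x ∉ PerSet S) :
    fInv S e c x = x := by
  unfold fInv gExp
  rw [if_neg hx]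
  simp

lemma fInv_fInv {S : X ≃ᵐ X} {e : X → ℝ} (he : Function.Injective e) (c c' : ℤ) (x : X) :
    fInv S e c' (fInv S e c x) = if x ∈ PerSet S then (S ^ (c' - c)) x else x := by
  by_cases hx : x ∈ PerSet S
  · rw [if_pos hx]
    set p := (posIdx S e x : ℤ) with hp
    set g := c - 2 * p with hg
    have hy : fInv S e c x = (S ^ g) x := fInv_apply_of_mem hx
    obtain ⟨hyp, hyn⟩ := perSet_zpow hx g
    rw [hy, fInv_apply_of_mem hyp]
    set p' := (posIdx S e ((S ^ g) x) : ℤ) with hp'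
    rw [← zpow_apply_add]
    apply zpow_congr (perN_pos_fix hx).2
    have hcong := posIdx_congr he hx g
    have heq : (c' - 2 * p' + g) - (c' - c) = (-2) * (p' - (p + g)) := by rw [hg]; ring
    rw [heq]
    exact Dvd.dvd.mul_left hcong (-2)
  · rw [if_neg hx, fInv_apply_of_not_mem hx, fInv_apply_of_not_mem hx]

lemma fInv_invol {S : X ≃ᵐ X} {e : X → ℝ} (he : Function.Injective e) (c : ℤ) (x : X) :
    fInv S e c (fInv S e c x) = x := by
  rw [fInv_fInv he c c x, sub_self]
  split <;> simp

end Aux2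
section Aux3

variable {X : Type*} [MeasurableSpace X]

open scoped Classical

lemma measurableSet_fixK (S : X ≃ᵐ X) {e : X → ℝ} (hm : Measurable e)
    (hi : Function.Injective e) (k : ℤ) : MeasurableSet {x | (S ^ k) x = x} := by
  have heq : {x | (S ^ k) x = x} = {x | e ((S ^ k) x) = e x} := by
    ext x
    exact ⟨fun h => congrArg e h, fun h => hi h⟩
  rw [heq]
  exact measurableSet_eq_fun (hm.comp (S ^ k).measurable) hm

lemma measurableSet_perSet (S : X ≃ᵐ X) {e : X → ℝ} (hm : Measurable e)
    (hi : Function.Injective e) : MeasurableSet (PerSet S) := by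
  have heq : PerSet S = ⋃ k : ℕ, ⋃ (_ : 0 < k), {x | (S ^ (k : ℤ)) x = x} := by
    ext x
    simp [PerSet, Set.mem_iUnion]
  rw [heq]
  exact MeasurableSet.iUnion fun k => MeasurableSet.iUnion fun _ => measurableSet_fixK S hm hi _

lemma perN_eq_iff {S : X ≃ᵐ X} {x : X} (hx : x ∈ PerSet S) (m : ℕ) :
    perN S x = m ↔ ((0 < m ∧ (S ^ (m : ℤ)) x = x) ∧
      ∀ k < m, ¬ (0 < k ∧ (S ^ (k : ℤ)) x = x)) := by
  constructor
  · rintro rfl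
    obtain ⟨h1, h2⟩ := perN_pos_fix hx
    exact ⟨⟨h1, h2⟩, fun k hk => Nat.notMem_of_lt_sInf hk⟩
  · rintro ⟨hm, hmin⟩
    have h1 : perN S x ≤ m := Nat.sInf_le hm
    have h2 := Nat.sInf_mem (show Set.Nonempty _ from hx)
    rcases lt_or_eq_of_le h1 with hlt | heq
    · exact absurd h2 (hmin _ hlt)
    · exact heq

lemma posIdx_eq_iff {S : X ≃ᵐ X} {e : X → ℝ} {x : X} (hx : x ∈ PerSet S) (i : ℕ) :
    posIdx S e x = i ↔
      ((i < perN S x ∧ ∀ j < perN S x, e ((S ^ (-(i : ℤ))) x) ≤ e ((S ^ (-(j : ℤ))) x)) ∧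
        ∀ i' < i, ¬ (i' < perN S x ∧
          ∀ j < perN S x, e ((S ^ (-(i' : ℤ))) x) ≤ e ((S ^ (-(j : ℤ))) x))) := by
  constructor
  · rintro rfl
    exact ⟨posIdx_spec e hx, fun i' hi' => Nat.notMem_of_lt_sInf hi'⟩
  · rintro ⟨hmem, hmin⟩
    have h1 : posIdx S e x ≤ i := Nat.sInf_le hmem
    have h2 := Nat.sInf_mem (posIdx_nonempty e hx)
    rcases lt_or_eq_of_le h1 with hlt | heq
    · exact absurd h2 (hmin _ hlt)
    · exact heq

lemma measurableSet_fiber (S : X ≃ᵐ X) {e : X → ℝ} (hm : Measurable e)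
    (hi : Function.Injective e) (m i : ℕ) :
    MeasurableSet {x | x ∈ PerSet S ∧ perN S x = m ∧ posIdx S e x = i} := by
  have hQ : ∀ i' : ℕ, MeasurableSet {x | i' < m ∧
      ∀ j < m, e ((S ^ (-(i' : ℤ))) x) ≤ e ((S ^ (-(j : ℤ))) x)} := by
    intro i'
    by_cases hi' : i' < m
    · have heq : {x | i' < m ∧ ∀ j < m, e ((S ^ (-(i' : ℤ))) x) ≤ e ((S ^ (-(j : ℤ))) x)} =
          ⋂ j ∈ Finset.range m, {x | e ((S ^ (-(i' : ℤ))) x) ≤ e ((S ^ (-(j : ℤ))) x)} := by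
        ext x
        simp only [Set.mem_setOf_eq, Set.mem_iInter, Finset.mem_range]
        exact ⟨fun h j hj => h.2 j hj, fun h => ⟨hi', fun j hj => h j hj⟩⟩
      rw [heq]
      exact MeasurableSet.biInter (Finset.range m).countable_toSet
        (fun j _ => measurableSet_le (hm.comp (S ^ (-(i' : ℤ))).measurable)
          (hm.comp (S ^ (-(j : ℤ))).measurable))
    · have heq : {x | i' < m ∧ ∀ j < m, e ((S ^ (-(i' : ℤ))) x) ≤ e ((S ^ (-(j : ℤ))) x)} =
          (∅ : Set X) := by
        ext x
        simp only [Set.mem_setOf_eq, Set.mem_empty_iff_false, iff_false, not_and]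
        exact fun h => absurd h hi'
      rw [heq]
      exact MeasurableSet.empty
  have key : {x | x ∈ PerSet S ∧ perN S x = m ∧ posIdx S e x = i} =
      PerSet S ∩ (({x | 0 < m ∧ (S ^ (m : ℤ)) x = x} ∩
        {x | ∀ k < m, ¬ (0 < k ∧ (S ^ (k : ℤ)) x = x)}) ∩
        ({x | i < m ∧ ∀ j < m, e ((S ^ (-(i : ℤ))) x) ≤ e ((S ^ (-(j : ℤ))) x)} ∩
          ⋂ i' ∈ Finset.range i, {x | i' < m ∧
            ∀ j < m, e ((S ^ (-(i' : ℤ))) x) ≤ e ((S ^ (-(j : ℤ))) x)}ᶜ)) := by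
    ext x
    simp only [Set.mem_setOf_eq, Set.mem_inter_iff, Set.mem_iInter, Set.mem_compl_iff,
      Finset.mem_range]
    constructor
    · rintro ⟨hxP, hm', hpos⟩
      obtain ⟨hma, hmb⟩ := (perN_eq_iff hxP m).mp hm'
      refine ⟨hxP, ⟨hma, hmb⟩, ?_, ?_⟩
      · have := (posIdx_eq_iff hxP i).mp hpos
        rw [← hm']
        exact this.1
      · intro i' hi'
        have := ((posIdx_eq_iff hxP i).mp hpos).2 i' hi'
        rw [← hm']
        exact this
    · rintro ⟨hxP, ⟨hma, hmb⟩, hQi, hQmin⟩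
      have hperN : perN S x = m := (perN_eq_iff hxP m).mpr ⟨hma, hmb⟩
      refine ⟨hxP, hperN, (posIdx_eq_iff hxP i).mpr ⟨?_, ?_⟩⟩
      · rw [hperN]; exact hQi
      · intro i' hi'
        rw [hperN]
        exact hQmin i' hi'
  rw [key]
  have hlast : MeasurableSet (⋂ i' ∈ Finset.range i, {x : X | i' < m ∧
      ∀ j < m, e ((S ^ (-(i' : ℤ))) x) ≤ e ((S ^ (-(j : ℤ))) x)}ᶜ) :=
    MeasurableSet.biInter (Finset.range i).countable_toSet fun i' _ => (hQ i').compl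
  have hmA : MeasurableSet {x : X | 0 < m ∧ (S ^ (m : ℤ)) x = x} := by
    by_cases h0 : 0 < m
    · have heq2 : {x : X | 0 < m ∧ (S ^ (m : ℤ)) x = x} = {x | (S ^ (m : ℤ)) x = x} := by
        ext x; simp [h0]
      rw [heq2]; exact measurableSet_fixK S hm hi _
    · have heq2 : {x : X | 0 < m ∧ (S ^ (m : ℤ)) x = x} = ∅ := by
        ext x; simp [h0]
      rw [heq2]; exact MeasurableSet.empty
  have hmB : MeasurableSet {x : X | ∀ k < m, ¬ (0 < k ∧ (S ^ (k : ℤ)) x = x)} := by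
    have heq2 : {x : X | ∀ k < m, ¬ (0 < k ∧ (S ^ (k : ℤ)) x = x)} =
        ⋂ k ∈ Finset.range m, ⋂ (_ : 0 < k), {x | (S ^ (k : ℤ)) x = x}ᶜ := by
      ext x
      simp only [Set.mem_setOf_eq, Set.mem_iInter, Finset.mem_range, Set.mem_compl_iff]
      constructor
      · intro hh k hk hk0
        exact fun hfix => hh k hk ⟨hk0, hfix⟩
      · rintro hh k hk ⟨hk0, hfix⟩
        exact hh k hk hk0 hfix
    rw [heq2]
    exact MeasurableSet.biInter (Finset.range m).countable_toSet
      (fun k _ => MeasurableSet.iInter fun _ => (measurableSet_fixK S hm hi _).compl)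
  exact (measurableSet_perSet S hm hi).inter
    ((hmA.inter hmB).inter ((hQ i).inter hlast))

lemma measurable_fInv (S : X ≃ᵐ X) {e : X → ℝ} (hm : Measurable e)
    (hi : Function.Injective e) (c : ℤ) : Measurable (fInv S e c) := by
  intro A hA
  have key : fInv S e c ⁻¹' A =
      ((PerSet S)ᶜ ∩ A) ∪ ⋃ m : ℕ, ⋃ i : ℕ,
        ({x | x ∈ PerSet S ∧ perN S x = m ∧ posIdx S e x = i} ∩
          (fun x => (S ^ (c - 2 * (i : ℤ))) x) ⁻¹' A) := by
    ext x
    by_cases hx : x ∈ PerSet S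
    · simp only [Set.mem_preimage, Set.mem_union, Set.mem_inter_iff, Set.mem_compl_iff,
        Set.mem_iUnion, Set.mem_setOf_eq]
      constructor
      · intro hfA
        right
        refine ⟨perN S x, posIdx S e x, ⟨hx, rfl, rfl⟩, ?_⟩
        rwa [← fInv_apply_of_mem hx]
      · rintro (⟨hnx, -⟩ | ⟨m, i, ⟨-, -, hieq⟩, hA'⟩)
        · exact absurd hx hnx
        · rw [fInv_apply_of_mem hx, hieq]
          exact hA'
    · simp only [Set.mem_preimage, Set.mem_union, Set.mem_inter_iff, Set.mem_compl_iff,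
        Set.mem_iUnion, Set.mem_setOf_eq]
      rw [fInv_apply_of_not_mem hx]
      constructor
      · intro hxA
        exact Or.inl ⟨hx, hxA⟩
      · rintro (⟨-, hxA⟩ | ⟨m, i, ⟨hxP, -⟩, -⟩)
        · exact hxA
        · exact absurd hxP hx
  rw [key]
  refine (((measurableSet_perSet S hm hi).compl.inter hA).union
    (MeasurableSet.iUnion fun m => MeasurableSet.iUnion fun i =>
      (measurableSet_fiber S hm hi m i).inter ((S ^ (c - 2 * (i : ℤ))).measurable hA)))

/-- The involutions as measurable equivalences. -/
noncomputable def invEquiv (S : X ≃ᵐ X) (e : X → ℝ) (hm : Measurable e)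
    (hi : Function.Injective e) (c : ℤ) : X ≃ᵐ X where
  toEquiv := ⟨fInv S e c, fInv S e c, fun x => fInv_invol hi c x, fun x => fInv_invol hi c x⟩
  measurable_toFun := measurable_fInv S hm hi c
  measurable_invFun := measurable_fInv S hm hi c

lemma invEquiv_apply (S : X ≃ᵐ X) (e : X → ℝ) (hm : Measurable e)
    (hi : Function.Injective e) (c : ℤ) (x : X) :
    invEquiv S e hm hi c x = fInv S e c x := rfl

end Aux3
section Aux4

variable {X : Type*} [MeasurableSpace X] {μ : Measure X}

lemma preimage_null_of_orbit (S' : MCP μ) {f : X → X}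
    (horb : ∀ x, ∃ k : ℤ, f x = (((S' : X ≃ᵐ X)) ^ k) x) {A : Set X} (hA : μ A = 0) :
    μ (f ⁻¹' A) = 0 := by
  have hsub : f ⁻¹' A ⊆ ⋃ k : ℤ, (fun x => (((S' : X ≃ᵐ X)) ^ k) x) ⁻¹' A := by
    intro x hx
    obtain ⟨k, hk⟩ := horb x
    exact Set.mem_iUnion.mpr ⟨k, by rw [Set.mem_preimage, ← hk]; exact hx⟩
  refine measure_mono_null hsub (measure_iUnion_null fun k => ?_)
  have hq := (MCP.qmp μ (S' ^ k)).preimage_null hA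
  rwa [SubgroupClass.coe_zpow] at hq

lemma mem_MCP_of_orbit (S' : MCP μ) (f : X ≃ᵐ X)
    (horb : ∀ x, ∃ k : ℤ, f x = (((S' : X ≃ᵐ X)) ^ k) x)
    (hinv : ∀ x, f (f x) = x) : f ∈ MCP μ := by
  have hpre : ∀ {A : Set X}, μ A = 0 → μ (f ⁻¹' A) = 0 :=
    fun hA => preimage_null_of_orbit S' horb hA
  constructor
  · refine Measure.AbsolutelyContinuous.mk fun A hAm hA => ?_
    rw [Measure.map_apply f.measurable hAm]
    exact hpre hA
  · refine Measure.AbsolutelyContinuous.mk fun A hAm hA => ?_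
    rw [Measure.map_apply f.measurable hAm] at hA
    have h2 : μ (f ⁻¹' (f ⁻¹' A)) = 0 := hpre hA
    have hsub : A ⊆ f ⁻¹' (f ⁻¹' A) := by
      intro x hx
      rw [Set.mem_preimage, Set.mem_preimage, hinv x]
      exact hx
    exact measure_mono_null hsub h2

lemma ae_zpow (A : MCP μ) {P : X → Prop} (hP : ∀ᵐ x ∂μ, P x) :
    ∀ᵐ x ∂μ, ∀ n : ℤ, P ((((A : X ≃ᵐ X)) ^ n) x) := by
  rw [ae_all_iff]
  intro n
  have h0 : μ {x | ¬ P x} = 0 := by rw [← MeasureTheory.ae_iff]; exact hP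
  have hq := (MCP.qmp μ (A ^ n)).preimage_null h0
  rw [SubgroupClass.coe_zpow] at hq
  rw [MeasureTheory.ae_iff]
  exact measure_mono_null (fun x hx => hx) hq

lemma toMod_eq_iff (A B : MCP μ) :
    toMod μ A = toMod μ B ↔ ∀ᵐ x ∂μ, ((B : X ≃ᵐ X)) x = ((A : X ≃ᵐ X)) x := by
  unfold toMod
  change (QuotientGroup.mk A : MCP μ ⧸ AeId μ) = QuotientGroup.mk B ↔ _
  rw [QuotientGroup.eq]
  have hmem : (A⁻¹ * B ∈ AeId μ) ↔
      ∀ᵐ x ∂μ, (((A⁻¹ * B : MCP μ) : X ≃ᵐ X)) x = x := Iff.rfl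
  rw [hmem]
  have key : ∀ x, ((((A⁻¹ * B : MCP μ) : X ≃ᵐ X)) x = x ↔
      ((B : X ≃ᵐ X)) x = ((A : X ≃ᵐ X)) x) := by
    intro x
    have happ : (((A⁻¹ * B : MCP μ) : X ≃ᵐ X)) x =
        ((A : X ≃ᵐ X)).symm (((B : X ≃ᵐ X)) x) := rfl
    rw [happ]
    constructor
    · intro h
      have h2 := congrArg (A : X ≃ᵐ X) h
      rwa [(A : X ≃ᵐ X).apply_symm_apply] at h2
    · intro h
      rw [h]
      exact (A : X ≃ᵐ X).symm_apply_apply x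
  exact ⟨fun h => h.mono fun x hx => (key x).mp hx, fun h => h.mono fun x hx => (key x).mpr hx⟩

lemma ae_zpow_eq (A B : MCP μ)
    (hab : ∀ᵐ x ∂μ, ((A : X ≃ᵐ X)) x = ((B : X ≃ᵐ X)) x) :
    ∀ᵐ x ∂μ, ∀ n : ℤ, (((A : X ≃ᵐ X)) ^ n) x = (((B : X ≃ᵐ X)) ^ n) x := by
  set a := (A : X ≃ᵐ X) with ha
  set b := (B : X ≃ᵐ X) with hb
  have hsymm : ∀ᵐ x ∂μ, a.symm x = b.symm x := by
    have h0 : μ {x | ¬ (a x = b x)} = 0 := by rw [← MeasureTheory.ae_iff]; exact hab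
    have hq := (MCP.qmp μ (B⁻¹)).preimage_null h0
    have h1 : ∀ᵐ x ∂μ, a (b.symm x) = b (b.symm x) := by
      rw [MeasureTheory.ae_iff]
      exact measure_mono_null (fun x hx => hx) hq
    filter_upwards [h1] with x hx
    have h2 : a (b.symm x) = x := by rw [hx]; exact b.apply_symm_apply x
    have h3 : b.symm x = a.symm x := by
      have := congrArg a.symm h2
      rwa [a.symm_apply_apply] at this
    exact h3.symm
  have key := ae_zpow A (hab.and hsymm)
  filter_upwards [key] with x hx
  intro n
  induction n using Int.induction_on with
  | zero => simp
  | succ k ih =>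
      rw [show ((k : ℤ) + 1) = 1 + k by ring, zpow_apply_add, zpow_apply_add, ← ih]
      have := (hx k).1
      simpa using this
  | pred k ih =>
      rw [show (-(k : ℤ) - 1) = (-1) + (-(k : ℤ)) by ring, zpow_apply_add, zpow_apply_add, ← ih]
      have hthis := (hx (-(k : ℤ))).2
      have ha1 : ∀ y, (a ^ (-1 : ℤ)) y = a.symm y := fun y => by
        rw [zpow_neg_apply, zpow_one]
      have hb1 : ∀ y, (b ^ (-1 : ℤ)) y = b.symm y := fun y => by
        rw [zpow_neg_apply, zpow_one]
      rw [ha1, hb1]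
      exact hthis

lemma comb {σ τ : ℤ → ℤ} (σ' : ℤ → ℤ) (hσ1 : ∀ n, σ' (σ n) = n)
    (hfin : ∀ n, ∃ k : ℕ, 0 < k ∧ σ^[k] n = n)
    (himg : (symmDiff (σ '' NN) NN).Finite)
    (hτinj : Function.Injective τ)
    (hτorb : ∀ n, ∃ k : ℕ, τ n = σ^[k] n) :
    (symmDiff (τ '' NN) NN).Finite := by
  classical
  set orb : ℤ → Set ℤ := fun n => {m | ∃ k : ℕ, σ^[k] n = m} with horb
  have hself : ∀ n, n ∈ orb n := fun n => ⟨0, rfl⟩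
  have htrans : ∀ {a n}, a ∈ orb n → orb a ⊆ orb n := by
    rintro a n ⟨k, hk⟩ m ⟨j, hj⟩
    exact ⟨j + k, by rw [Function.iterate_add_apply, hk, hj]⟩
  have hsymm : ∀ {a n}, a ∈ orb n → n ∈ orb a := by
    rintro a n ⟨k, hk⟩
    obtain ⟨p, hp0, hp⟩ := hfin n
    refine ⟨p * k - k, ?_⟩
    have hfixmul : σ^[p * k] n = n := by
      rw [Function.iterate_mul]
      exact Function.iterate_fixed hp k
    rw [← hk, ← Function.iterate_add_apply]
    rw [Nat.sub_add_cancel (Nat.le_mul_of_pos_left k hp0)]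
    exact hfixmul
  have horbfin : ∀ n, (orb n).Finite := by
    intro n
    obtain ⟨p, hp0, hp⟩ := hfin n
    apply Set.Finite.subset (Set.finite_range (fun i : Fin p => σ^[(i : ℕ)] n))
    rintro m ⟨k, rfl⟩
    refine ⟨⟨k % p, Nat.mod_lt k hp0⟩, ?_⟩
    simp only
    have hfix2 : σ^[p] (σ^[k % p] n) = σ^[k % p] n := by
      rw [← Function.iterate_add_apply, add_comm, Function.iterate_add_apply, hp]
    have hsplit : σ^[k] n = (σ^[p])^[k / p] (σ^[k % p] n) := by
      rw [← Function.iterate_mul, ← Function.iterate_add_apply, Nat.div_add_mod]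
    rw [hsplit, Function.iterate_fixed hfix2]
  have hσinj : Function.Injective σ := Function.LeftInverse.injective hσ1
  set D : Set ℤ := {m | 0 ≤ m ∧ ¬ 0 ≤ σ m} with hD
  have hDfin : D.Finite := by
    have hsub : D ⊆ σ ⁻¹' (symmDiff (σ '' NN) NN) := by
      rintro m ⟨hm1, hm2⟩
      rw [Set.mem_preimage, Set.mem_symmDiff]
      exact Or.inl ⟨⟨m, hm1, rfl⟩, hm2⟩
    exact (himg.preimage hσinj.injOn).subset hsub
  set Bad : Set ℤ := ⋃ m ∈ D, orb m with hBad
  have hBadfin : Bad.Finite := hDfin.biUnion fun m _ => horbfin m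
  have hcross : ∀ n m', (0:ℤ) ≤ n → m' ∈ orb n → ¬ (0:ℤ) ≤ m' → ∃ d ∈ D, n ∈ orb d := by
    intro n m' hn hm' hneg
    obtain ⟨k, hk⟩ := hm'
    have hex : ∃ j, ¬ (0:ℤ) ≤ σ^[j] n := ⟨k, by rwa [hk]⟩
    set j := Nat.find hex with hj
    have hjspec : ¬ (0:ℤ) ≤ σ^[j] n := Nat.find_spec hex
    have hj0 : j ≠ 0 := by
      intro h0
      rw [h0] at hjspec
      exact hjspec hn
    obtain ⟨j', hj'⟩ : ∃ j', j = j' + 1 := ⟨j - 1, by omega⟩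
    have hj'pos : (0:ℤ) ≤ σ^[j'] n := by
      by_contra hcon
      exact Nat.find_min hex (by omega) hcon
    refine ⟨σ^[j'] n, ⟨hj'pos, ?_⟩, hsymm ⟨j', rfl⟩⟩
    rw [hj'] at hjspec
    rwa [Function.iterate_succ_apply'] at hjspec
  have hmain : symmDiff (τ '' NN) NN ⊆ Bad := by
    intro m hm
    rw [Set.mem_symmDiff] at hm
    rcases hm with ⟨⟨n, hn, rfl⟩, hm2⟩ | ⟨hm1, hm2⟩
    · have hnNN : (0:ℤ) ≤ n := hn
      have hτn : τ n ∈ orb n := by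
        obtain ⟨k, hk⟩ := hτorb n
        exact ⟨k, hk.symm⟩
      obtain ⟨d, hd, hnd⟩ := hcross n (τ n) hnNN hτn hm2
      exact Set.mem_biUnion hd (htrans hnd hτn)
    · have hmNN : (0:ℤ) ≤ m := hm1
      by_cases hsub : ∀ a ∈ orb m, (0:ℤ) ≤ a
      · exfalso
        have hmaps : Set.MapsTo τ (orb m) (orb m) := by
          intro a ha
          have : τ a ∈ orb a := by
            obtain ⟨k, hk⟩ := hτorb a
            exact ⟨k, hk.symm⟩
          exact htrans ha this
        have hbij : Set.BijOn τ (orb m) (orb m) :=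
          ((horbfin m).injOn_iff_bijOn_of_mapsTo hmaps).mp hτinj.injOn
        obtain ⟨a, ha, hτa⟩ := hbij.surjOn (hself m)
        exact hm2 ⟨a, hsub a ha, hτa⟩
      · push_neg at hsub
        obtain ⟨a, ha, haneg⟩ := hsub
        obtain ⟨d, hd, hmd⟩ := hcross m a hmNN ha (not_le.mpr haneg)
        exact Set.mem_biUnion hd hmd
  exact hBadfin.subset hmain

end Aux4
/- ## Statement 18 -/
/-- **Lemma.** For aperiodic `T ∈ Aut(X,[μ])`, every periodic element of `[T]_com` is a
product of two involutions belonging to `[T]_com`. -/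
theorem periodic_eq_product_of_two_involutions
    {X : Type*} [MeasurableSpace X] [StandardBorelSpace X]
    (μ : Measure X) [IsProbabilityMeasure μ] [NullSingletonClass μ]
    (𝕋 : AutMod μ) (h : AperiodicMod μ 𝕋)
    (𝕊 : AutMod μ) (h𝕊 : 𝕊 ∈ CommFullSet μ 𝕋) (hper : PeriodicMod μ 𝕊) :
    ∃ U V : AutMod μ, U ∈ CommFullSet μ 𝕋 ∧ V ∈ CommFullSet μ 𝕋 ∧
      U * U = 1 ∧ V * V = 1 ∧ 𝕊 = U * V := by
  classical
  obtain ⟨T, S₀, hT, hS₀, hcomm⟩ := h𝕊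
  obtain ⟨S, hS, hSper⟩ := hper
  obtain ⟨T₂, hT₂, hT₂ap⟩ := h
  obtain ⟨e, he⟩ := exists_measurableEmbedding_real X
  set t : X ≃ᵐ X := (T : X ≃ᵐ X) with htdef
  set s : X ≃ᵐ X := (S : X ≃ᵐ X) with hsdef
  set s₀ : X ≃ᵐ X := (S₀ : X ≃ᵐ X) with hs0def
  have hem : Measurable e := he.measurable
  have hei : Function.Injective e := he.injective
  -- basic a.e. facts
  have hSS₀ : ∀ᵐ x ∂μ, s₀ x = s x := (toMod_eq_iff S S₀).mp (hS.trans hS₀.symm)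
  have hTT₂ : ∀ᵐ x ∂μ, ∀ n : ℤ, (t ^ n) x = ((T₂ : X ≃ᵐ X) ^ n) x :=
    ae_zpow_eq T T₂ ((toMod_eq_iff T₂ T).mp (hT₂.trans hT.symm))
  have hinj : ∀ᵐ x ∂μ, Function.Injective (fun n : ℤ => (t ^ n) x) := by
    filter_upwards [hTT₂, hT₂ap] with x hx hx2
    apply injective_of_orbit_infinite
    have horb : orbitZ t x = orbitZ (T₂ : X ≃ᵐ X) x := by
      rw [orbitZ_eq_range, orbitZ_eq_range]
      exact congrArg Set.range (funext hx)
    rw [horb]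
    exact hx2
  have hPer : ∀ᵐ x ∂μ, x ∈ PerSet s := hSper.mono fun x hx => (orbit_finite_iff s x).mp hx
  have hsfull : ∀ᵐ x ∂μ, ∃ m : ℤ, s x = (t ^ m) x := by
    filter_upwards [hcomm.1, hSS₀] with x hx1 hx2
    obtain ⟨m, hm⟩ := hx1
    exact ⟨m, by rw [← hx2]; exact hm⟩
  have hsymmfull : ∀ᵐ x ∂μ, ∃ m : ℤ, s.symm x = (t ^ m) x := by
    have hpre := ae_zpow S hsfull
    filter_upwards [hpre] with x hx
    obtain ⟨m, hm⟩ := hx (-1)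
    have hs1 : (s ^ (-1 : ℤ)) x = s.symm x := by rw [zpow_neg_apply, zpow_one]
    rw [hs1, s.apply_symm_apply] at hm
    have h2 := congrArg (t ^ m).symm hm
    rw [(t ^ m).symm_apply_apply] at h2
    exact ⟨-m, by rw [zpow_neg_apply]; exact h2.symm⟩
  have hW : ∀ᵐ x ∂μ, (∃ m : ℤ, s x = (t ^ m) x) ∧ (∃ m : ℤ, s.symm x = (t ^ m) x) :=
    hsfull.and hsymmfull
  have hgood : ∀ᵐ x ∂μ, ∀ n : ℤ,
      ((∃ m : ℤ, s ((t ^ n) x) = (t ^ m) ((t ^ n) x)) ∧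
       (∃ m : ℤ, s.symm ((t ^ n) x) = (t ^ m) ((t ^ n) x))) := ae_zpow T hW
  have hPerOrb : ∀ᵐ x ∂μ, ∀ n : ℤ, (t ^ n) x ∈ PerSet s := ae_zpow T hPer
  have hS₀Orb : ∀ᵐ x ∂μ, ∀ n : ℤ, s₀ ((t ^ n) x) = s ((t ^ n) x) := ae_zpow T hSS₀
  have hfwd₀ : ∀ᵐ x ∂μ, (symmDiff (fwdSet t s₀ x) NN).Finite := hcomm.2
  -- the involutions
  set Ueq : X ≃ᵐ X := invEquiv s e hem hei 1 with hUeqdef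
  set Veq : X ≃ᵐ X := invEquiv s e hem hei 0 with hVeqdef
  have hUorb : ∀ x, ∃ k : ℤ, Ueq x = (s ^ k) x := fun x => ⟨gExp s e 1 x, rfl⟩
  have hVorb : ∀ x, ∃ k : ℤ, Veq x = (s ^ k) x := fun x => ⟨gExp s e 0 x, rfl⟩
  have hUinvol : ∀ x, Ueq (Ueq x) = x := fun x => fInv_invol hei 1 x
  have hVinvol : ∀ x, Veq (Veq x) = x := fun x => fInv_invol hei 0 x
  have hUmem : Ueq ∈ MCP μ := mem_MCP_of_orbit S Ueq hUorb hUinvol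
  have hVmem : Veq ∈ MCP μ := mem_MCP_of_orbit S Veq hVorb hVinvol
  -- the main pointwise analysis
  have hall : ∀ᵐ x ∂μ,
      ((∃ n : ℤ, Ueq x = (t ^ n) x) ∧ (∃ n : ℤ, Veq x = (t ^ n) x)) ∧
      ((symmDiff (fwdSet t Ueq x) NN).Finite ∧ (symmDiff (fwdSet t Veq x) NN).Finite) := by
    filter_upwards [hinj, hgood, hPerOrb, hS₀Orb, hfwd₀] with x hx_inj hx_good hx_per hx_s0 hx_fwd
    -- totality of the orbit permutations
    have htot : ∀ n k : ℤ, ∃ m : ℤ, (s ^ k) ((t ^ n) x) = (t ^ m) x := by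
      intro n k
      induction k using Int.induction_on with
      | zero => exact ⟨n, by simp⟩
      | succ k ih =>
          obtain ⟨m, hm⟩ := ih
          obtain ⟨m', hm'⟩ := (hx_good m).1
          refine ⟨m' + m, ?_⟩
          rw [show ((k : ℤ) + 1) = 1 + k by ring, zpow_apply_add, hm, zpow_one, hm',
            ← zpow_apply_add]
      | pred k ih =>
          obtain ⟨m, hm⟩ := ih
          obtain ⟨m', hm'⟩ := (hx_good m).2
          refine ⟨m' + m, ?_⟩
          rw [show (-(k : ℤ) - 1) = (-1) + (-(k : ℤ)) by ring, zpow_apply_add, hm]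
          have hs1 : (s ^ (-1 : ℤ)) ((t ^ m) x) = s.symm ((t ^ m) x) := by
            rw [zpow_neg_apply, zpow_one]
          rw [hs1, hm', ← zpow_apply_add]
    have uniq : ∀ {m m' : ℤ}, (t ^ m) x = (t ^ m') x → m = m' := fun h => hx_inj h
    choose σfun hσfun using fun n => htot n 1
    choose σfun' hσfun' using fun n => htot n (-1)
    have hσs : ∀ n, s ((t ^ n) x) = (t ^ (σfun n)) x := by
      intro n
      have h1 := hσfun n
      rwa [zpow_one] at h1
    have hσs' : ∀ n, s.symm ((t ^ n) x) = (t ^ (σfun' n)) x := by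
      intro n
      have h1 := hσfun' n
      rwa [zpow_neg_apply, zpow_one] at h1
    have hσ1 : ∀ n, σfun' (σfun n) = n := by
      intro n
      apply uniq
      rw [← hσs' (σfun n), ← hσs n, s.symm_apply_apply]
    have hiter : ∀ (k : ℕ) (n : ℤ), (s ^ (k : ℤ)) ((t ^ n) x) = (t ^ (σfun^[k] n)) x := by
      intro k
      induction k with
      | zero => intro n; simp
      | succ k ih =>
          intro n
          rw [show ((k + 1 : ℕ) : ℤ) = 1 + (k : ℤ) by push_cast; ring, zpow_apply_add, ih n,
            Function.iterate_succ_apply', zpow_one, hσs]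
    have hfin : ∀ n : ℤ, ∃ k : ℕ, 0 < k ∧ σfun^[k] n = n := by
      intro n
      obtain ⟨q, hq0, hqfix⟩ := hx_per n
      refine ⟨q, hq0, uniq ?_⟩
      rw [← hiter q n, hqfix]
    have himgfact : ∀ (f : X ≃ᵐ X) (g : ℤ → ℤ), (∀ n, f ((t ^ n) x) = (t ^ (g n)) x) →
        fwdSet t f x = g '' NN := by
      intro f g hg
      ext m
      simp only [fwdSet, permImage, Set.mem_setOf_eq, Set.mem_image]
      constructor
      · rintro ⟨n, hn, hfn⟩
        exact ⟨n, hn, uniq (by rw [← hg n]; exact hfn)⟩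
      · rintro ⟨n, hn, rfl⟩
        exact ⟨n, hn, hg n⟩
    have himgσ : (symmDiff (σfun '' NN) NN).Finite := by
      have h2 : fwdSet t s x = σfun '' NN := himgfact s σfun hσs
      have h1 : fwdSet t s₀ x = fwdSet t s x := by
        ext m
        simp only [fwdSet, permImage, Set.mem_setOf_eq]
        constructor
        · rintro ⟨n, hn, hfn⟩
          exact ⟨n, hn, by rw [← hx_s0 n]; exact hfn⟩
        · rintro ⟨n, hn, hfn⟩
          exact ⟨n, hn, by rw [hx_s0 n]; exact hfn⟩
      rw [← h2, ← h1]
      exact hx_fwd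
    -- the induced maps of U and V
    have hτexU : ∀ n : ℤ, ∃ m : ℤ, Ueq ((t ^ n) x) = (t ^ m) x := by
      intro n
      obtain ⟨m, hm⟩ := htot n (gExp s e 1 ((t ^ n) x))
      exact ⟨m, hm⟩
    have hτexV : ∀ n : ℤ, ∃ m : ℤ, Veq ((t ^ n) x) = (t ^ m) x := by
      intro n
      obtain ⟨m, hm⟩ := htot n (gExp s e 0 ((t ^ n) x))
      exact ⟨m, hm⟩
    choose τU hτU using hτexU
    choose τV hτV using hτexV
    have hτUinj : Function.Injective τU := by
      intro a b hab
      exact uniq (Ueq.injective (by rw [hτU a, hτU b, hab]))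
    have hτVinj : Function.Injective τV := by
      intro a b hab
      exact uniq (Veq.injective (by rw [hτV a, hτV b, hab]))
    have hτorb : ∀ (c : ℤ) (τ : ℤ → ℤ), (∀ n, (s ^ (gExp s e c ((t ^ n) x))) ((t ^ n) x)
        = (t ^ (τ n)) x) → ∀ n, ∃ k : ℕ, τ n = σfun^[k] n := by
      intro c τ hτ n
      obtain ⟨q, hq0, hqfix⟩ := hx_per n
      set g := gExp s e c ((t ^ n) x) with hgdef
      have hmod : (s ^ g) ((t ^ n) x) = (s ^ (g % (q : ℤ))) ((t ^ n) x) := zpow_emod hqfix g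
      have hnn : 0 ≤ g % (q : ℤ) := Int.emod_nonneg g (by exact_mod_cast hq0.ne')
      refine ⟨(g % (q : ℤ)).toNat, uniq ?_⟩
      rw [← hτ n, ← hiter _ n, Int.toNat_of_nonneg hnn, ← hmod]
    have hτUorb : ∀ n, ∃ k : ℕ, τU n = σfun^[k] n := hτorb 1 τU fun n => hτU n
    have hτVorb : ∀ n, ∃ k : ℕ, τV n = σfun^[k] n := hτorb 0 τV fun n => hτV n
    have hUcomm : (symmDiff (fwdSet t Ueq x) NN).Finite := by
      rw [himgfact Ueq τU hτU]
      exact comb σfun' hσ1 hfin himgσ hτUinj hτUorb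
    have hVcomm : (symmDiff (fwdSet t Veq x) NN).Finite := by
      rw [himgfact Veq τV hτV]
      exact comb σfun' hσ1 hfin himgσ hτVinj hτVorb
    have h00 : (t ^ (0 : ℤ)) x = x := zpow_zero_apply t x
    refine ⟨⟨⟨τU 0, ?_⟩, ⟨τV 0, ?_⟩⟩, hUcomm, hVcomm⟩
    · have h1 := hτU 0
      rwa [h00] at h1
    · have h1 := hτV 0
      rwa [h00] at h1
  have hUfull : InFull μ t Ueq := hall.mono fun x hx => hx.1.1
  have hVfull : InFull μ t Veq := hall.mono fun x hx => hx.1.2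
  have hUcommAe : ∀ᵐ x ∂μ, (symmDiff (fwdSet t Ueq x) NN).Finite :=
    hall.mono fun x hx => hx.2.1
  have hVcommAe : ∀ᵐ x ∂μ, (symmDiff (fwdSet t Veq x) NN).Finite :=
    hall.mono fun x hx => hx.2.2
  set Umcp : MCP μ := ⟨Ueq, hUmem⟩ with hUmcpdef
  set Vmcp : MCP μ := ⟨Veq, hVmem⟩ with hVmcpdef
  refine ⟨toMod μ Umcp, toMod μ Vmcp, ⟨T, Umcp, hT, rfl, hUfull, hUcommAe⟩,
    ⟨T, Vmcp, hT, rfl, hVfull, hVcommAe⟩, ?_, ?_, ?_⟩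
  · have hU1 : Umcp * Umcp = 1 := Subtype.ext (MeasurableEquiv.ext (funext fun x => hUinvol x))
    show (QuotientGroup.mk Umcp * QuotientGroup.mk Umcp : MCP μ ⧸ AeId μ) = 1
    exact congrArg (fun g : MCP μ => (QuotientGroup.mk g : MCP μ ⧸ AeId μ)) hU1
  · have hV1 : Vmcp * Vmcp = 1 := Subtype.ext (MeasurableEquiv.ext (funext fun x => hVinvol x))
    show (QuotientGroup.mk Vmcp * QuotientGroup.mk Vmcp : MCP μ ⧸ AeId μ) = 1
    exact congrArg (fun g : MCP μ => (QuotientGroup.mk g : MCP μ ⧸ AeId μ)) hV1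
  · have hprod : toMod μ Umcp * toMod μ Vmcp = toMod μ (Umcp * Vmcp) := by
      show (QuotientGroup.mk Umcp * QuotientGroup.mk Vmcp : MCP μ ⧸ AeId μ) = _
      rfl
    rw [hprod, ← hS]
    apply (toMod_eq_iff S (Umcp * Vmcp)).mpr
    filter_upwards [hPer] with x hx
    show Ueq (Veq x) = s x
    have hff := fInv_fInv (S := s) hei 0 1 x
    rw [if_pos hx] at hff
    calc Ueq (Veq x) = fInv s e 1 (fInv s e 0 x) := rfl
      _ = (s ^ ((1 : ℤ) - 0)) x := hff
      _ = s x := by rw [sub_zero, zpow_one]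

end CfgPaper
end
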